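/- arXiv:1703.09241 — 11 statements merged into one kernel-verified Lean document; each statement's English description precedes it below -/
import Mathlib

section
/- Let G > 0 and s ≥ 0, let t₀ ∈ ℝ, and let a : [t₀,∞) → ℝ be differentiable with a(t) > 0 for all t and a(t) → ∞ as t → ∞. Suppose χ : [t₀,∞) → ℝ satisfies χ(t) > 0 and 1/χ(t) = a'(t) − 2Gs/a(t)² for all t ≥ t₀, and suppose the generalized entropy S(t) = (π/G)·χ(t)²·a(t)² + (4/3)·π·χ(t)³·s converges to a finite positive limit S_max as t → ∞. Then χ(t)·a(t) → √(G·S_max/π) and a'(t)/a(t) → √(π/(G·S_max)) as t → ∞; that is, the expansion rate tends to the constant H = √(π/(G·S_max)), and S_max = π/(G·H²) coincides with the de Sitter horizon entropy. -/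
open Real Filter

/-- Cosmic no-hair theorem for flat Robertson-Walker spacetimes: if the generalized
entropy along the Q-screen tends to a finite positive maximum, the expansion rate
tends to the constant `H = √(π/(G·S_max))` and `S_max` is the de Sitter horizon entropy. -/
theorem stmt_0 (G s t₀ Smax : ℝ) (hG : 0 < G) (hs : 0 ≤ s)
    (a χ : ℝ → ℝ)
    (ha_diff : ∀ t, t₀ ≤ t → DifferentiableAt ℝ a t)
    (ha_pos : ∀ t, t₀ ≤ t → 0 < a t)
    (ha_inf : Tendsto a atTop atTop)
    (hχ_pos : ∀ t, t₀ ≤ t → 0 < χ t)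
    (hχ_eq : ∀ t, t₀ ≤ t → 1 / χ t = deriv a t - 2 * G * s / (a t) ^ 2)
    (hSmax : 0 < Smax)
    (hS : Tendsto (fun t => (π / G) * (χ t) ^ 2 * (a t) ^ 2 + (4 / 3) * π * (χ t) ^ 3 * s)
      atTop (nhds Smax)) :
    Tendsto (fun t => χ t * a t) atTop (nhds (Real.sqrt (G * Smax / π))) ∧
    Tendsto (fun t => deriv a t / a t) atTop (nhds (Real.sqrt (π / (G * Smax)))) ∧
    Smax = π / (G * (Real.sqrt (π / (G * Smax))) ^ 2) := by
  have hπ : (0:ℝ) < π := Real.pi_pos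
  set C : ℝ := Real.sqrt ((G / π) * (Smax + 1)) with hC
  have hC0 : 0 ≤ C := Real.sqrt_nonneg _
  -- eventual bound on χ·a
  have hSlt : ∀ᶠ t in atTop,
      (π / G) * (χ t) ^ 2 * (a t) ^ 2 + (4 / 3) * π * (χ t) ^ 3 * s < Smax + 1 :=
    hS.eventually_lt_const (lt_add_one Smax)
  have hbnd : ∀ᶠ t in atTop, χ t * a t ≤ C := by
    filter_upwards [hSlt, eventually_ge_atTop t₀] with t h1 ht
    have hχt := hχ_pos t ht
    have hat := ha_pos t ht
    have h2 : 0 ≤ (4 / 3) * π * (χ t) ^ 3 * s := by positivity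
    have h3 : (π / G) * (χ t * a t) ^ 2 ≤ Smax + 1 := by nlinarith
    have h4 : (χ t * a t) ^ 2 ≤ (G / π) * (Smax + 1) := by
      have := mul_le_mul_of_nonneg_left h3 (le_of_lt (div_pos hG hπ))
      calc (χ t * a t) ^ 2 = (G / π) * ((π / G) * (χ t * a t) ^ 2) := by
            field_simp
          _ ≤ (G / π) * (Smax + 1) := this
    exact (Real.le_sqrt (by positivity) (by nlinarith)).mpr h4
  have hainv : Tendsto (fun t => (a t)⁻¹) atTop (nhds 0) := ha_inf.inv_tendsto_atTop
  -- the matter entropy term tends to zero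
  have h0 : Tendsto (fun t => (4 / 3) * π * (χ t) ^ 3 * s) atTop (nhds 0) := by
    have hb : Tendsto (fun t => (4 / 3) * π * s * C ^ 3 * ((a t)⁻¹) ^ 3) atTop (nhds 0) := by
      have := ((hainv.pow 3).const_mul ((4 / 3) * π * s * C ^ 3))
      simpa using this
    refine squeeze_zero' ?_ ?_ hb
    · filter_upwards [eventually_ge_atTop t₀] with t ht
      have := hχ_pos t ht
      positivity
    · filter_upwards [hbnd, eventually_ge_atTop t₀] with t hb ht
      have hχt := hχ_pos t ht
      have hat := ha_pos t ht
      have hχle : χ t ≤ C * (a t)⁻¹ := by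
        rw [← div_eq_mul_inv, le_div_iff₀ hat]; exact hb
      have hp : (χ t) ^ 3 ≤ (C * (a t)⁻¹) ^ 3 := pow_le_pow_left₀ hχt.le hχle 3
      calc (4 / 3) * π * (χ t) ^ 3 * s
          ≤ (4 / 3) * π * ((C * (a t)⁻¹) ^ 3) * s :=
            mul_le_mul_of_nonneg_right (mul_le_mul_of_nonneg_left hp (by positivity)) hs
        _ = (4 / 3) * π * s * C ^ 3 * ((a t)⁻¹) ^ 3 := by ring
  -- (χ·a)² tends to G·Smax/π
  have h1 : Tendsto (fun t => (χ t * a t) ^ 2) atTop (nhds (G * Smax / π)) := by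
    have h := (hS.sub h0).const_mul (G / π)
    have heq : ∀ t, (G / π) * (((π / G) * (χ t) ^ 2 * (a t) ^ 2 + (4 / 3) * π * (χ t) ^ 3 * s)
        - (4 / 3) * π * (χ t) ^ 3 * s) = (χ t * a t) ^ 2 := by
      intro t; field_simp; ring
    rw [show G * Smax / π = (G / π) * (Smax - 0) by ring]
    exact Tendsto.congr heq h
  have hval : (0:ℝ) < G * Smax / π := by positivity
  have hχa : Tendsto (fun t => χ t * a t) atTop (nhds (Real.sqrt (G * Smax / π))) := by
    have hsq : Tendsto (fun t => Real.sqrt ((χ t * a t) ^ 2)) atTop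
        (nhds (Real.sqrt (G * Smax / π))) := (Real.continuous_sqrt.tendsto _).comp h1
    refine hsq.congr' ?_
    filter_upwards [eventually_ge_atTop t₀] with t ht
    exact Real.sqrt_sq (mul_pos (hχ_pos t ht) (ha_pos t ht)).le
  have hLpos : 0 < Real.sqrt (G * Smax / π) := Real.sqrt_pos.mpr hval
  -- the Hubble rate
  have hH : Tendsto (fun t => deriv a t / a t) atTop (nhds (Real.sqrt (π / (G * Smax)))) := by
    have hinv : Tendsto (fun t => (χ t * a t)⁻¹) atTop
        (nhds (Real.sqrt (G * Smax / π))⁻¹) := hχa.inv₀ hLpos.ne'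
    have hrest : Tendsto (fun t => 2 * G * s * ((a t)⁻¹) ^ 3) atTop (nhds 0) := by
      have := (hainv.pow 3).const_mul (2 * G * s)
      simpa using this
    have hsum := hinv.add hrest
    have hlim : (Real.sqrt (G * Smax / π))⁻¹ + 0 = Real.sqrt (π / (G * Smax)) := by
      rw [add_zero, ← Real.sqrt_inv, inv_div]
    rw [← hlim]
    refine hsum.congr' ?_
    filter_upwards [eventually_ge_atTop t₀] with t ht
    have hχt := hχ_pos t ht
    have hat := ha_pos t ht
    have hd : deriv a t = 1 / χ t + 2 * G * s / (a t) ^ 2 := by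
      have := hχ_eq t ht; linarith
    rw [hd]; field_simp
  refine ⟨hχa, hH, ?_⟩
  rw [Real.sq_sqrt (by positivity : (0:ℝ) ≤ π / (G * Smax))]
  field_simp
end

section
/- Let G > 0 and s ≥ 0, let t₀ ∈ ℝ, and let a : [t₀,∞) → ℝ be differentiable with a(t) > 0, a'(t) > 0 for all t, and a(t) → ∞ as t → ∞. Suppose χ : [t₀,∞) → (0,π) satisfies a'(t) − 2Gs/a(t)² = cos(χ(t))/sin(χ(t)) for all t ≥ t₀, and suppose S(t) = (π/G)·sin²(χ(t))·a(t)² + 2π·(χ(t) − sin(χ(t))·cos(χ(t)))·s converges to a finite positive limit S_max as t → ∞. Then sin(χ(t))·a(t) → √(G·S_max/π), χ(t) → 0, and a'(t)/a(t) → √(π/(G·S_max)) as t → ∞. -/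
open Real Filter Topology

/-!
The volume term of the generalized entropy is nonnegative, so the area term
`(π/G)(a sin χ)²` stays bounded; as `a → ∞` this forces `sin χ → 0`. The marginality
condition `cot χ = a' - 2Gs/a² > -2Gs/a² → 0` then keeps `cos χ > 0`, so `χ → 0` rather
than `χ → π`. Now the volume term vanishes in the limit, the area term alone tends to
`S_max`, which gives the limit of `a sin χ`, and `a'/a = cos χ / (a sin χ) + 2Gs/a³` tends
to its inverse.
-/

/-- The volume of the ball of geodesic radius `χ` in the unit 3-sphere. -/
noncomputable def comovingVolume (χ : ℝ) : ℝ := 2 * π * (χ - sin χ * cos χ)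

noncomputable def generalizedEntropy (G s χ a : ℝ) : ℝ :=
  (π / G) * sin χ ^ 2 * a ^ 2 + comovingVolume χ * s

lemma comovingVolume_nonneg {χ : ℝ} (hχ : 0 ≤ χ) : 0 ≤ comovingVolume χ := by
  have h := sin_le (by linarith : 0 ≤ 2 * χ)
  rw [sin_two_mul] at h
  unfold comovingVolume
  nlinarith [pi_pos]

lemma tendsto_comovingVolume_zero : Tendsto comovingVolume (𝓝 0) (𝓝 0) := by
  have hcont : Continuous comovingVolume := by unfold comovingVolume; fun_prop
  simpa [comovingVolume] using hcont.tendsto 0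

lemma sq_sin_mul_eq_generalizedEntropy_sub {G : ℝ} (hG : G ≠ 0) (s χ a : ℝ) :
    (sin χ * a) ^ 2 = G / π * (generalizedEntropy G s χ a - comovingVolume χ * s) := by
  unfold generalizedEntropy
  field_simp [pi_ne_zero]
  ring

lemma sq_sin_mul_le_generalizedEntropy {G s χ : ℝ} (hG : 0 < G) (hs : 0 ≤ s) (hχ : 0 ≤ χ)
    (a : ℝ) : (sin χ * a) ^ 2 ≤ G / π * generalizedEntropy G s χ a := by
  rw [sq_sin_mul_eq_generalizedEntropy_sub hG.ne']
  have := mul_nonneg (comovingVolume_nonneg hχ) hs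
  gcongr
  linarith

section Asymptotics

variable {α : Type*} {l : Filter α} {a H χ : α → ℝ} {c : ℝ}

lemma tendsto_nhds_zero_of_sq_mul_le {u F : α → ℝ} {S : ℝ}
    (hu : ∀ᶠ t in l, 0 ≤ u t) (ha : Tendsto a l atTop) (hF : Tendsto F l (𝓝 S))
    (hle : ∀ᶠ t in l, (u t * a t) ^ 2 ≤ F t) : Tendsto u l (𝓝 0) := by
  refine tendsto_of_tendsto_of_tendsto_of_le_of_le' tendsto_const_nhds
    (hF.sqrt.div_atTop ha) hu ?_
  filter_upwards [hle, ha.eventually_gt_atTop 0] with t hlet hat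
  rw [le_div_iff₀ hat]
  exact (le_abs_self _).trans (abs_le_sqrt hlet)

lemma tendsto_nhds_zero_of_tendsto_sin (hsin : Tendsto (fun t => sin (χ t)) l (𝓝 0))
    (hχ : ∀ᶠ t in l, χ t ∈ Set.Icc (-(π / 2)) (π / 2)) : Tendsto χ l (𝓝 0) := by
  have h := (continuous_arcsin.tendsto 0).comp hsin
  rw [arcsin_zero] at h
  refine h.congr' ?_
  filter_upwards [hχ] with t ht using arcsin_sin ht.1 ht.2

lemma cos_pos_of_neg_sin_lt_cos {x : ℝ} (h : -sin x < cos x) (hsin : sin x ^ 2 < 1 / 2) :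
    0 < cos x := by
  by_contra! hc
  nlinarith [sin_sq_add_cos_sq x]

lemma eventually_cos_pos_of_sub_eq_cot (ha : Tendsto a l atTop)
    (hsin : Tendsto (fun t => sin (χ t)) l (𝓝 0)) (hsin_pos : ∀ᶠ t in l, 0 < sin (χ t))
    (hH_pos : ∀ᶠ t in l, 0 < H t)
    (hH : ∀ᶠ t in l, H t - c / a t ^ 2 = cos (χ t) / sin (χ t)) :
    ∀ᶠ t in l, 0 < cos (χ t) := by
  have hc : ∀ᶠ t in l, c / a t ^ 2 < 1 :=
    ((tendsto_pow_atTop two_ne_zero).comp ha).const_div_atTop c |>.eventually_lt_const one_pos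
  have hsin_sq : ∀ᶠ t in l, sin (χ t) ^ 2 < 1 / 2 := by
    have := hsin.pow 2
    rw [zero_pow two_ne_zero] at this
    exact this.eventually_lt_const (by norm_num)
  filter_upwards [hsin_pos, hH_pos, hH, hc, hsin_sq] with t hsp hHp hHt hct hsq
  refine cos_pos_of_neg_sin_lt_cos ?_ hsq
  have hcot : -1 < cos (χ t) / sin (χ t) := by linarith
  rwa [lt_div_iff₀ hsp, neg_one_mul] at hcot

lemma tendsto_div_of_sub_eq_cot {L : ℝ} (hL : L ≠ 0) (ha : Tendsto a l atTop)
    (hsa : Tendsto (fun t => sin (χ t) * a t) l (𝓝 L))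
    (hcos : Tendsto (fun t => cos (χ t)) l (𝓝 1))
    (hH : ∀ᶠ t in l, H t - c / a t ^ 2 = cos (χ t) / sin (χ t)) :
    Tendsto (fun t => H t / a t) l (𝓝 L⁻¹) := by
  have hlim := (hcos.div hsa hL).add
    (((tendsto_pow_atTop two_ne_zero).comp ha).const_div_atTop c |>.div_atTop ha)
  rw [one_div, add_zero] at hlim
  refine hlim.congr' ?_
  filter_upwards [hH, hsa.eventually_ne hL] with t hHt hne
  rw [Pi.div_apply, Function.comp_apply, eq_add_of_sub_eq hHt]
  have ha0 : a t ≠ 0 := right_ne_zero_of_mul hne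
  have hs0 : sin (χ t) ≠ 0 := left_ne_zero_of_mul hne
  field_simp

lemma tendsto_sin_mul_of_tendsto_generalizedEntropy {G s S : ℝ} (hG : 0 < G)
    (hχ : Tendsto χ l (𝓝 0))
    (hnonneg : ∀ᶠ t in l, 0 ≤ sin (χ t) * a t)
    (hS : Tendsto (fun t => generalizedEntropy G s (χ t) (a t)) l (𝓝 S)) :
    Tendsto (fun t => sin (χ t) * a t) l (𝓝 √(G * S / π)) := by
  have hV := (tendsto_comovingVolume_zero.comp hχ).mul_const s
  have hsq := (hS.sub hV).const_mul (G / π)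
  rw [zero_mul, sub_zero, div_mul_eq_mul_div₀] at hsq
  have hsq' := hsq.congr fun t => (sq_sin_mul_eq_generalizedEntropy_sub hG.ne' s _ _).symm
  refine hsq'.sqrt.congr' ?_
  filter_upwards [hnonneg] with t h using sqrt_sq h

end Asymptotics

theorem stmt_2_general (G s t₀ Smax : ℝ) (hG : 0 < G) (hs : 0 ≤ s)
    (a χ : ℝ → ℝ)
    (ha_pos : ∀ t, t₀ ≤ t → 0 < a t)
    (ha_incr : ∀ t, t₀ ≤ t → 0 < deriv a t)
    (ha_inf : Tendsto a atTop atTop)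
    (hχ_mem : ∀ t, t₀ ≤ t → χ t ∈ Set.Ioo (0:ℝ) π)
    (hχ_eq : ∀ t, t₀ ≤ t →
      deriv a t - 2 * G * s / (a t) ^ 2 = Real.cos (χ t) / Real.sin (χ t))
    (hSmax : 0 < Smax)
    (hS : Tendsto (fun t => (π / G) * (Real.sin (χ t)) ^ 2 * (a t) ^ 2 +
        2 * π * (χ t - Real.sin (χ t) * Real.cos (χ t)) * s)
      atTop (nhds Smax)) :
    Tendsto (fun t => Real.sin (χ t) * a t) atTop (nhds (Real.sqrt (G * Smax / π))) ∧
    Tendsto χ atTop (nhds 0) ∧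
    Tendsto (fun t => deriv a t / a t) atTop (nhds (Real.sqrt (π / (G * Smax)))) := by
  have hS' : Tendsto (fun t => generalizedEntropy G s (χ t) (a t)) atTop (𝓝 Smax) := hS
  have hev := eventually_ge_atTop t₀
  have hsin_pos : ∀ᶠ t in atTop, 0 < sin (χ t) :=
    hev.mono fun t ht => sin_pos_of_mem_Ioo (hχ_mem t ht)
  have hsin : Tendsto (fun t => sin (χ t)) atTop (𝓝 0) :=
    tendsto_nhds_zero_of_sq_mul_le (hsin_pos.mono fun _ => le_of_lt) ha_inf
      (hS'.const_mul (G / π)) (hev.mono fun t ht =>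
        sq_sin_mul_le_generalizedEntropy hG hs (hχ_mem t ht).1.le (a t))
  have hcos_pos := eventually_cos_pos_of_sub_eq_cot ha_inf hsin hsin_pos (hev.mono ha_incr)
    (hev.mono hχ_eq)
  have hχ : Tendsto χ atTop (𝓝 0) := by
    refine tendsto_nhds_zero_of_tendsto_sin hsin ?_
    filter_upwards [hev, hcos_pos] with t ht hcos
    refine ⟨by linarith [(hχ_mem t ht).1, pi_pos], not_lt.1 fun hlt => hcos.not_ge ?_⟩
    exact cos_nonpos_of_pi_div_two_le_of_le hlt.le (by linarith [(hχ_mem t ht).2, pi_pos])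
  have hsa := tendsto_sin_mul_of_tendsto_generalizedEntropy hG hχ
    (by filter_upwards [hev, hsin_pos] with t ht h using mul_nonneg h.le (ha_pos t ht).le) hS'
  refine ⟨hsa, hχ, ?_⟩
  have hcos : Tendsto (fun t => cos (χ t)) atTop (𝓝 1) := by
    simpa [Function.comp_def] using (continuous_cos.tendsto 0).comp hχ
  have hH := tendsto_div_of_sub_eq_cot (sqrt_pos.2 (by positivity)).ne' ha_inf hsa hcos
    (hev.mono hχ_eq)
  rwa [← sqrt_inv, inv_div] at hH

/-- Cosmic no-hair theorem for closed Robertson-Walker spacetimes. -/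
theorem stmt_2 (G s t₀ Smax : ℝ) (hG : 0 < G) (hs : 0 ≤ s)
    (a χ : ℝ → ℝ)
    (ha_diff : ∀ t, t₀ ≤ t → DifferentiableAt ℝ a t)
    (ha_pos : ∀ t, t₀ ≤ t → 0 < a t)
    (ha_incr : ∀ t, t₀ ≤ t → 0 < deriv a t)
    (ha_inf : Tendsto a atTop atTop)
    (hχ_mem : ∀ t, t₀ ≤ t → χ t ∈ Set.Ioo (0:ℝ) π)
    (hχ_eq : ∀ t, t₀ ≤ t →
      deriv a t - 2 * G * s / (a t) ^ 2 = Real.cos (χ t) / Real.sin (χ t))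
    (hSmax : 0 < Smax)
    (hS : Tendsto (fun t => (π / G) * (Real.sin (χ t)) ^ 2 * (a t) ^ 2 +
        2 * π * (χ t - Real.sin (χ t) * Real.cos (χ t)) * s)
      atTop (nhds Smax)) :
    Tendsto (fun t => Real.sin (χ t) * a t) atTop (nhds (Real.sqrt (G * Smax / π))) ∧
    Tendsto χ atTop (nhds 0) ∧
    Tendsto (fun t => deriv a t / a t) atTop (nhds (Real.sqrt (π / (G * Smax)))) :=
  stmt_2_general G s t₀ Smax hG hs a χ ha_pos ha_incr ha_inf hχ_mem hχ_eq hSmax hS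
end

section
/- Let H > 0, c ≥ 0, t₀ ∈ ℝ, and let a : [t₀,∞) → ℝ be differentiable with a(t) > 0 for all t and a'(t) = H·a(t) + c/a(t)² for all t ≥ t₀. Then a(t) → ∞ as t → ∞, and there exists a constant L > 0 such that a(t)·e^{−Ht} → L as t → ∞; i.e., the scale factor is asymptotically de Sitter with Hubble constant H. -/
open Real Filter Set

/-! The ratio `g(t) = a(t)·e^{-Ht}` satisfies `g' = c·e^{-Ht}/a² ≥ 0`, so it is nondecreasing;
hence `a(t) ≥ g(t₀)·e^{Ht}`, which gives `a → ∞` and, fed back into the equation,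
`g' ≤ (c / g(t₀)²)·e^{-3Ht}`. The latter is integrable at infinity, so `g` is bounded
and converges to a limit `L ≥ g(t₀) > 0`. -/

lemma monotoneOn_Ici_of_hasDerivAt_nonneg {f f' : ℝ → ℝ} {t₀ : ℝ}
    (hf : ∀ t, t₀ ≤ t → HasDerivAt f (f' t) t) (hf' : ∀ t, t₀ ≤ t → 0 ≤ f' t) :
    MonotoneOn f (Ici t₀) := by
  refine monotoneOn_of_hasDerivWithinAt_nonneg (f' := f') (convex_Ici t₀)
    (fun t ht => (hf t ht).continuousAt.continuousWithinAt) ?_ ?_ <;> rw [interior_Ici]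
  · exact fun t ht => (hf t (le_of_lt ht)).hasDerivWithinAt
  · exact fun t ht => hf' t (le_of_lt ht)

lemma antitoneOn_Ici_of_hasDerivAt_nonpos {f f' : ℝ → ℝ} {t₀ : ℝ}
    (hf : ∀ t, t₀ ≤ t → HasDerivAt f (f' t) t) (hf' : ∀ t, t₀ ≤ t → f' t ≤ 0) :
    AntitoneOn f (Ici t₀) := by
  have := monotoneOn_Ici_of_hasDerivAt_nonneg (fun t ht => (hf t ht).neg)
    (fun t ht => neg_nonneg.2 (hf' t ht))
  exact fun s hs t ht hst => neg_le_neg_iff.1 (this hs ht hst)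

lemma exists_tendsto_of_monotoneOn_Ici {f : ℝ → ℝ} {t₀ M : ℝ} (hf : MonotoneOn f (Ici t₀))
    (hM : ∀ t, t₀ ≤ t → f t ≤ M) : ∃ L, f t₀ ≤ L ∧ Tendsto f atTop (nhds L) := by
  set F : ℝ → ℝ := fun t => f (max t t₀)
  have hF : Monotone F := fun s t hst =>
    hf (le_max_right s t₀) (le_max_right t t₀) (max_le_max_right t₀ hst)
  have hbdd : BddAbove (range F) := ⟨M, by rintro _ ⟨t, rfl⟩; exact hM _ (le_max_right t t₀)⟩
  refine ⟨⨆ t, F t, ?_, (tendsto_atTop_ciSup hF hbdd).congr' ?_⟩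
  · simpa [F] using le_ciSup hbdd t₀
  · filter_upwards [eventually_ge_atTop t₀] with t ht
    simp [F, max_eq_left ht]

lemma le_add_of_hasDerivAt_le_mul_exp {f f' : ℝ → ℝ} {t₀ k M : ℝ} (hk : 0 < k) (hM : 0 ≤ M)
    (hf : ∀ t, t₀ ≤ t → HasDerivAt f (f' t) t) (hf' : ∀ t, t₀ ≤ t → f' t ≤ M * exp (-k * t))
    {t : ℝ} (ht : t₀ ≤ t) : f t ≤ f t₀ + M / k * exp (-k * t₀) := by
  have hdecay : ∀ s, HasDerivAt (fun s => M / k * exp (-k * s)) (-(M * exp (-k * s))) s := by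
    intro s
    refine (((hasDerivAt_id' s).const_mul (-k)).exp.const_mul (M / k)).congr_deriv ?_
    field_simp
  have hanti : AntitoneOn (fun s => f s + M / k * exp (-k * s)) (Ici t₀) :=
    antitoneOn_Ici_of_hasDerivAt_nonpos (fun s hs => (hf s hs).add (hdecay s))
      (fun s hs => by linarith [hf' s hs])
  have := hanti self_mem_Ici ht ht
  have : 0 ≤ M / k * exp (-k * t) := by positivity
  linarith

lemma hasDerivAt_mul_exp_neg_mul {a : ℝ → ℝ} {H r t : ℝ} (ha : HasDerivAt a (H * a t + r) t) :
    HasDerivAt (fun s => a s * exp (-H * s)) (exp (-H * t) * r) t := by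
  refine (ha.mul ((hasDerivAt_id' t).const_mul (-H)).exp).congr_deriv ?_
  ring

lemma exp_neg_mul_mul_div_sq_le {H c b x t : ℝ} (hc : 0 ≤ c) (hb : 0 < b)
    (hx : b * exp (H * t) ≤ x) : exp (-H * t) * (c / x ^ 2) ≤ c / b ^ 2 * exp (-(3 * H) * t) :=
  calc exp (-H * t) * (c / x ^ 2)
      ≤ exp (-H * t) * (c / (b * exp (H * t)) ^ 2) := by
        have : 0 < b * exp (H * t) := by positivity
        gcongr
    _ = c / b ^ 2 * exp (-(3 * H) * t) := by
        have : exp (-(3 * H) * t) * exp (H * t) ^ 2 = exp (-H * t) := by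
          rw [← exp_nat_mul, ← exp_add]; ring_nf
        rw [← this]
        field_simp

/-- A scale factor satisfying `a' = H·a + c/a²` with `H > 0`, `c ≥ 0` diverges and is
asymptotically de Sitter: `a(t)·e^{−Ht}` tends to a positive constant. -/
theorem stmt_4 (H c t₀ : ℝ) (hH : 0 < H) (hc : 0 ≤ c)
    (a : ℝ → ℝ)
    (ha_pos : ∀ t, t₀ ≤ t → 0 < a t)
    (ha_ode : ∀ t, t₀ ≤ t → HasDerivAt a (H * a t + c / (a t) ^ 2) t) :
    Tendsto a atTop atTop ∧
    ∃ L : ℝ, 0 < L ∧ Tendsto (fun t => a t * Real.exp (-H * t)) atTop (nhds L) := by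
  set g : ℝ → ℝ := fun t => a t * exp (-H * t)
  have hg' : ∀ t, t₀ ≤ t → HasDerivAt g (exp (-H * t) * (c / a t ^ 2)) t :=
    fun t ht => hasDerivAt_mul_exp_neg_mul (ha_ode t ht)
  have hg_mono : MonotoneOn g (Ici t₀) :=
    monotoneOn_Ici_of_hasDerivAt_nonneg hg' fun t _ => by positivity
  have hg₀ : 0 < g t₀ := mul_pos (ha_pos t₀ le_rfl) (exp_pos _)
  have ha_ge : ∀ t, t₀ ≤ t → g t₀ * exp (H * t) ≤ a t := by
    intro t ht
    have hgt : a t = g t * exp (H * t) := by simp [g, mul_assoc, ← exp_add]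
    rw [hgt]
    exact mul_le_mul_of_nonneg_right (hg_mono self_mem_Ici ht ht) (exp_pos _).le
  refine ⟨tendsto_atTop_mono' atTop ?_ ((tendsto_exp_atTop.comp
    (tendsto_id.const_mul_atTop hH)).const_mul_atTop hg₀), ?_⟩
  · filter_upwards [eventually_ge_atTop t₀] with t ht using ha_ge t ht
  obtain ⟨L, hL, hgL⟩ := exists_tendsto_of_monotoneOn_Ici hg_mono
    fun t ht => le_add_of_hasDerivAt_le_mul_exp (by positivity) (by positivity) hg'
      (fun t ht => exp_neg_mul_mul_div_sq_le hc hg₀ (ha_ge t ht)) ht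
  exact ⟨L, hg₀.trans_le hL, hgL⟩
end

section
/- Let H > 0, let η₁ < 0, and let a : (η₁, 0) → ℝ be differentiable with a(η) > 0 for all η, a(η) → ∞ as η → 0⁻, and a(η)²/a'(η) → 1/H as η → 0⁻. Then (−η)·a(η) → 1/H as η → 0⁻; that is, a(η) is asymptotic to −1/(Hη), the de Sitter scale factor in conformal time. -/
open Real Filter Topology

/- L'Hôpital applied to `(c - x) / (a x)⁻¹`: both tend to `0`, and the quotient of their
derivatives is `(-1) / (-a' / a²) = a² / a'` (even where `a'` vanishes, as `x / 0 = 0`). -/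
theorem tendsto_sub_mul_nhdsLT_of_tendsto_sq_div_deriv {a : ℝ → ℝ} {c L : ℝ} (hL : L ≠ 0)
    (hdiff : ∀ᶠ x in 𝓝[<] c, DifferentiableAt ℝ a x)
    (htop : Tendsto a (𝓝[<] c) atTop)
    (hlim : Tendsto (fun x => a x ^ 2 / deriv a x) (𝓝[<] c) (𝓝 L)) :
    Tendsto (fun x => (c - x) * a x) (𝓝[<] c) (𝓝 L) := by
  have hdiv_eq : (fun x => (-1 : ℝ) / (-deriv a x / a x ^ 2)) = fun x => a x ^ 2 / deriv a x := by
    funext x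
    rw [neg_div (a x ^ 2), neg_div_neg_eq, one_div_div]
  have hdiv : Tendsto (fun x => (-1 : ℝ) / (-deriv a x / a x ^ 2)) (𝓝[<] c) (𝓝 L) :=
    hdiv_eq ▸ hlim
  have hsub : Tendsto (fun x => c - x) (𝓝[<] c) (𝓝 0) :=
    ((continuous_const.sub continuous_id).tendsto' c 0 (sub_self c)).mono_left nhdsWithin_le_nhds
  have hquot := HasDerivAt.lhopital_zero_nhdsLT
    (Eventually.of_forall fun x => (hasDerivAt_id x).const_sub c)
    (by filter_upwards [hdiff, htop.eventually_gt_atTop 0] with x hx hpos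
        exact hx.hasDerivAt.inv hpos.ne')
    (by filter_upwards [hdiv.eventually_ne hL] with x hx
        exact (div_ne_zero_iff.mp hx).2)
    hsub htop.inv_tendsto_atTop hdiv
  simpa only [id, Pi.inv_apply, div_inv_eq_mul] using hquot

theorem stmt_5_general (H η₁ : ℝ) (hH : 0 < H) (hη₁ : η₁ < 0)
    (a : ℝ → ℝ)
    (ha_diff : ∀ η ∈ Set.Ioo η₁ (0:ℝ), DifferentiableAt ℝ a η)
    (ha_inf : Tendsto a (nhdsWithin 0 (Set.Iio 0)) atTop)
    (hlim : Tendsto (fun η => (a η) ^ 2 / deriv a η)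
      (nhdsWithin 0 (Set.Iio 0)) (nhds (1 / H))) :
    Tendsto (fun η => (-η) * a η) (nhdsWithin 0 (Set.Iio 0)) (nhds (1 / H)) := by
  have hdiff : ∀ᶠ η in 𝓝[<] (0 : ℝ), DifferentiableAt ℝ a η :=
    mem_of_superset (Ioo_mem_nhdsLT hη₁) ha_diff
  simpa only [zero_sub] using
    tendsto_sub_mul_nhdsLT_of_tendsto_sq_div_deriv (one_div_pos.mpr hH).ne' hdiff ha_inf hlim

/-- If `a(η) → ∞` and `a²/a' → 1/H` as `η → 0⁻`, then `(−η)·a(η) → 1/H`,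
i.e. `a` is asymptotic to the de Sitter scale factor `−1/(Hη)` in conformal time. -/
theorem stmt_5 (H η₁ : ℝ) (hH : 0 < H) (hη₁ : η₁ < 0)
    (a : ℝ → ℝ)
    (ha_diff : ∀ η ∈ Set.Ioo η₁ (0:ℝ), DifferentiableAt ℝ a η)
    (ha_pos : ∀ η ∈ Set.Ioo η₁ (0:ℝ), 0 < a η)
    (ha_inf : Tendsto a (nhdsWithin 0 (Set.Iio 0)) atTop)
    (hlim : Tendsto (fun η => (a η) ^ 2 / deriv a η)
      (nhdsWithin 0 (Set.Iio 0)) (nhds (1 / H))) :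
    Tendsto (fun η => (-η) * a η) (nhdsWithin 0 (Set.Iio 0)) (nhds (1 / H)) :=
  stmt_5_general H η₁ hH hη₁ a ha_diff ha_inf hlim
end

section
/- Let b : ℝ → ℝ be continuous and let η < η₀ be real numbers. Define ρ(θ,ζ) = √(cos²θ·e^{−2b(ζ)} + sin²θ·e^{2b(ζ)}), and set K(θ) = ∫_η^{η₀} ρ(θ,ζ)^{−3} dζ, so that the angular derivatives of the conformal light-cone coordinates are ∂x/∂θ = −sinθ·K(θ) and ∂y/∂θ = cosθ·K(θ). Then the rescaled circumference L(η,η₀) = ∫₀^{2π} √(e^{2b(η)}·(∂x/∂θ)² + e^{−2b(η)}·(∂y/∂θ)²) dθ satisfies L(η,η₀) ≥ 4·(η₀ − η). -/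
open Real Filter intervalIntegral

/-!
Write `ρ_c(θ) = √(cos²θ e^{-2c} + sin²θ e^{2c})`, so that `ρ θ ζ = ρ_{b ζ}(θ)`. The integrand of `L`
is `ρ_{b η}(θ) K(θ)`, hence by Fubini `L = ∫_η^{η₀} ∫₀^{2π} ρ_{b η}(θ) / ρ_{b ζ}(θ)³ dθ dζ`, and it
suffices that every inner integral is at least `4`.

For `c ≤ a` use `ρ_a(θ) ≥ e^a |sin θ|`: since `sin θ / ρ_c(θ)³` is the derivative of
`-cos θ / (e^{2c} ρ_c(θ))`, which moves by `2 e^{-c}` on each of `[0, π]` and `[π, 2π]`, the inner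
integral is at least `4 e^{a - c} ≥ 4`. The case `a ≤ c` reduces to this one by the shift
`θ ↦ θ + π/2`, which turns `ρ_c` into `ρ_{-c}`.
-/

namespace BianchiI

noncomputable def rho (c θ : ℝ) : ℝ :=
  √(cos θ ^ 2 * exp (-(2 * c)) + sin θ ^ 2 * exp (2 * c))

lemma rho_radicand_pos (c θ : ℝ) :
    0 < cos θ ^ 2 * exp (-(2 * c)) + sin θ ^ 2 * exp (2 * c) := by
  rcases eq_or_ne (sin θ) 0 with h | h
  · have hcos : cos θ ^ 2 = 1 := by nlinarith [sin_sq_add_cos_sq θ]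
    rw [h, hcos]
    positivity
  · positivity

lemma rho_pos (c θ : ℝ) : 0 < rho c θ := sqrt_pos.2 (rho_radicand_pos c θ)

lemma rho_pow_three_ne_zero (c θ : ℝ) : rho c θ ^ 3 ≠ 0 := (pow_pos (rho_pos c θ) 3).ne'

lemma rho_sq (c θ : ℝ) : rho c θ ^ 2 = cos θ ^ 2 * exp (-(2 * c)) + sin θ ^ 2 * exp (2 * c) :=
  sq_sqrt (rho_radicand_pos c θ).le

@[fun_prop]
lemma Continuous.rho {α : Type*} [TopologicalSpace α] {f g : α → ℝ} (hf : Continuous f)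
    (hg : Continuous g) : Continuous fun x => rho (f x) (g x) := by
  unfold BianchiI.rho; fun_prop

lemma rho_of_sin_eq_zero (c : ℝ) {θ : ℝ} (h : sin θ = 0) : rho c θ = exp (-c) := by
  have hcos : cos θ ^ 2 = 1 := by nlinarith [sin_sq_add_cos_sq θ]
  rw [rho, h, hcos, sqrt_eq_iff_mul_self_eq_of_pos (exp_pos _), ← exp_add]
  ring_nf

lemma exp_mul_abs_sin_le_rho (c θ : ℝ) : exp c * |sin θ| ≤ rho c θ := by
  have he : exp c ^ 2 = exp (2 * c) := by rw [← exp_nat_mul]; norm_num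
  refine le_sqrt_of_sq_le ?_
  rw [mul_pow, sq_abs, he]
  nlinarith [mul_nonneg (sq_nonneg (cos θ)) (exp_pos (-(2 * c))).le]

lemma rho_add_pi_div_two (c θ : ℝ) : rho c (θ + π / 2) = rho (-c) θ := by
  simp only [rho, cos_add_pi_div_two, sin_add_pi_div_two, neg_sq]
  ring_nf

lemma rho_periodic (c : ℝ) : Function.Periodic (rho c) (2 * π) := fun θ => by
  simp only [rho, cos_add_two_pi, sin_add_two_pi]

lemma hasDerivAt_rho (c θ : ℝ) :
    HasDerivAt (rho c) (sin θ * cos θ * (exp (2 * c) - exp (-(2 * c))) / rho c θ) θ := by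
  have hq : HasDerivAt (fun t => cos t ^ 2 * exp (-(2 * c)) + sin t ^ 2 * exp (2 * c))
      (2 * sin θ * cos θ * (exp (2 * c) - exp (-(2 * c)))) θ :=
    ((((hasDerivAt_cos θ).pow 2).mul_const _).add
      (((hasDerivAt_sin θ).pow 2).mul_const _)).congr_deriv (by ring)
  refine (hq.sqrt (rho_radicand_pos c θ).ne').congr_deriv ?_
  rw [← rho]
  field_simp

lemma hasDerivAt_neg_cos_div_rho (c θ : ℝ) :
    HasDerivAt (fun t => -cos t / (exp (2 * c) * rho c t)) (sin θ / rho c θ ^ 3) θ := by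
  have hpos := rho_pos c θ
  refine ((hasDerivAt_cos θ).neg.div ((hasDerivAt_rho c θ).const_mul (exp (2 * c)))
    (by positivity)).congr_deriv ?_
  simp only [Pi.neg_apply]
  field_simp
  linear_combination sin θ * rho_sq c θ + sin θ * exp (2 * c) * sin_sq_add_cos_sq θ

lemma abs_sub_le_integral_abs_of_hasDerivAt {F f : ℝ → ℝ} {u v : ℝ} (huv : u ≤ v)
    (hF : ∀ x ∈ Set.uIcc u v, HasDerivAt F (f x) x)
    (hf : IntervalIntegrable f MeasureTheory.volume u v) :
    |F v - F u| ≤ ∫ x in u..v, |f x| := by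
  rw [← integral_eq_sub_of_hasDerivAt hF hf]
  exact abs_integral_le_integral_abs huv

lemma four_mul_exp_neg_le_integral_abs_sin_div_rho (c : ℝ) :
    4 * exp (-c) ≤ ∫ θ in 0..2 * π, |sin θ / rho c θ ^ 3| := by
  set F := fun t => -cos t / (exp (2 * c) * rho c t)
  have hF : ∀ θ, sin θ = 0 → F θ = -cos θ * exp (-c) := fun θ h => by
    simp only [F, rho_of_sin_eq_zero c h, div_eq_mul_inv, ← exp_add, ← exp_neg]
    ring_nf
  have hderiv : ∀ u v, ∀ x ∈ Set.uIcc u v, HasDerivAt F (sin x / rho c x ^ 3) x :=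
    fun _ _ x _ => hasDerivAt_neg_cos_div_rho c x
  have hint : ∀ u v,
      IntervalIntegrable (fun θ => sin θ / rho c θ ^ 3) MeasureTheory.volume u v :=
    fun u v => (Continuous.div (by fun_prop) (by fun_prop)
      fun θ => rho_pow_three_ne_zero c θ).intervalIntegrable u v
  calc 4 * exp (-c) = |F π - F 0| + |F (2 * π) - F π| := by
        rw [hF 0 sin_zero, hF π sin_pi, hF (2 * π) sin_two_pi, cos_zero, cos_pi, cos_two_pi]
        have he := exp_pos (-c)
        rw [abs_of_pos (by linarith), abs_of_neg (by linarith)]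
        ring
    _ ≤ (∫ θ in 0..π, |sin θ / rho c θ ^ 3|) + ∫ θ in π..2 * π, |sin θ / rho c θ ^ 3| :=
        add_le_add (abs_sub_le_integral_abs_of_hasDerivAt pi_pos.le (hderiv _ _) (hint _ _))
          (abs_sub_le_integral_abs_of_hasDerivAt (by linarith [pi_pos]) (hderiv _ _) (hint _ _))
    _ = ∫ θ in 0..2 * π, |sin θ / rho c θ ^ 3| :=
        integral_add_adjacent_intervals (hint _ _).abs (hint _ _).abs

lemma four_le_integral_rho_div_rho_pow_three_of_le {a c : ℝ} (hca : c ≤ a) :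
    4 ≤ ∫ θ in 0..2 * π, rho a θ / rho c θ ^ 3 := by
  have hint :
      IntervalIntegrable (fun θ => |sin θ / rho c θ ^ 3|) MeasureTheory.volume 0 (2 * π) :=
    (Continuous.div (by fun_prop) (by fun_prop)
      fun θ => rho_pow_three_ne_zero c θ).abs.intervalIntegrable _ _
  have hpointwise : ∀ θ, exp a * |sin θ / rho c θ ^ 3| ≤ rho a θ / rho c θ ^ 3 := fun θ => by
    have hpos := rho_pos c θ
    rw [abs_div, abs_of_pos (pow_pos hpos 3), ← mul_div_assoc]
    exact div_le_div_of_nonneg_right (exp_mul_abs_sin_le_rho a θ) (by positivity)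
  calc (4 : ℝ) ≤ exp a * (4 * exp (-c)) := by
        rw [mul_left_comm, ← exp_add]
        nlinarith [add_one_le_exp (a + -c)]
    _ ≤ exp a * ∫ θ in 0..2 * π, |sin θ / rho c θ ^ 3| :=
        by gcongr; exact four_mul_exp_neg_le_integral_abs_sin_div_rho c
    _ = ∫ θ in 0..2 * π, exp a * |sin θ / rho c θ ^ 3| := (integral_const_mul _ _).symm
    _ ≤ ∫ θ in 0..2 * π, rho a θ / rho c θ ^ 3 :=
        integral_mono_on (by linarith [pi_pos]) (hint.const_mul _)
          ((Continuous.div (by fun_prop) (by fun_prop)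
            fun θ => rho_pow_three_ne_zero c θ).intervalIntegrable _ _)
          fun θ _ => hpointwise θ

lemma integral_rho_neg_div_rho_neg_pow_three (a c : ℝ) :
    ∫ θ in 0..2 * π, rho (-a) θ / rho (-c) θ ^ 3 = ∫ θ in 0..2 * π, rho a θ / rho c θ ^ 3 := by
  have hper : Function.Periodic (fun θ => rho a θ / rho c θ ^ 3) (2 * π) := fun θ => by
    simp only [rho_periodic a θ, rho_periodic c θ]
  simp_rw [← rho_add_pi_div_two]
  have := hper.intervalIntegral_add_eq (π / 2) 0
  rw [zero_add] at this
  rw [integral_comp_add_right (fun θ => rho a θ / rho c θ ^ 3), zero_add, add_comm (2 * π), this]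

lemma four_le_integral_rho_div_rho_pow_three (a c : ℝ) :
    4 ≤ ∫ θ in 0..2 * π, rho a θ / rho c θ ^ 3 := by
  rcases le_total c a with hca | hac
  · exact four_le_integral_rho_div_rho_pow_three_of_le hca
  · rw [← integral_rho_neg_div_rho_neg_pow_three]
    exact four_le_integral_rho_div_rho_pow_three_of_le (neg_le_neg hac)

lemma sqrt_exp_mul_sq_add_exp_neg_mul_sq (a θ k : ℝ) :
    √(exp (2 * a) * (-sin θ * k) ^ 2 + exp (-(2 * a)) * (cos θ * k) ^ 2) = rho a θ * |k| := by
  rw [show exp (2 * a) * (-sin θ * k) ^ 2 + exp (-(2 * a)) * (cos θ * k) ^ 2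
      = (cos θ ^ 2 * exp (-(2 * a)) + sin θ ^ 2 * exp (2 * a)) * k ^ 2 by ring,
    sqrt_mul (rho_radicand_pos a θ).le, sqrt_sq_eq_abs, rho]

end BianchiI

open BianchiI

/-- Lower bound on the (rescaled) circumference of a constant-η light-cone slice in a
1+2-dimensional Bianchi I spacetime: `L(η,η₀) ≥ 4(η₀ − η)`. -/
theorem stmt_7 (b : ℝ → ℝ) (hb : Continuous b) (η η₀ : ℝ) (hη : η < η₀)
    (ρ : ℝ → ℝ → ℝ)
    (hρ : ∀ θ ζ, ρ θ ζ = Real.sqrt ((Real.cos θ) ^ 2 * Real.exp (-(2 * b ζ)) +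
      (Real.sin θ) ^ 2 * Real.exp (2 * b ζ)))
    (K : ℝ → ℝ)
    (hK : ∀ θ, K θ = ∫ ζ in η..η₀, 1 / (ρ θ ζ) ^ 3)
    (L : ℝ)
    (hL : L = ∫ θ in (0:ℝ)..(2 * π),
      Real.sqrt (Real.exp (2 * b η) * (-Real.sin θ * K θ) ^ 2 +
        Real.exp (-(2 * b η)) * (Real.cos θ * K θ) ^ 2)) :
    4 * (η₀ - η) ≤ L := by
  obtain rfl : ρ = fun θ ζ => rho (b ζ) θ := funext₂ hρ
  have hK_nonneg : ∀ θ, 0 ≤ K θ := fun θ => by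
    rw [hK]
    exact integral_nonneg hη.le fun ζ _ => by have := rho_pos (b ζ) θ; positivity
  have hcont : Continuous fun p : ℝ × ℝ => rho (b η) p.1 / rho (b p.2) p.1 ^ 3 :=
    Continuous.div (by fun_prop) (by fun_prop) fun p => rho_pow_three_ne_zero _ _
  have hL_iter : L = ∫ θ in 0..2 * π, ∫ ζ in η..η₀, rho (b η) θ / rho (b ζ) θ ^ 3 := by
    rw [hL]
    refine integral_congr fun θ _ => ?_
    rw [sqrt_exp_mul_sq_add_exp_neg_mul_sq, abs_of_nonneg (hK_nonneg θ), hK,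
      ← integral_const_mul]
    simp only [mul_one_div]
  rw [hL_iter, MeasureTheory.intervalIntegral_intervalIntegral_swap
    (F := fun θ ζ => rho (b η) θ / rho (b ζ) θ ^ 3)
    ((hcont.continuousOn.integrableOn_compact (isCompact_uIcc.prod isCompact_uIcc)).mono_set
      (Set.prod_mono Set.uIoc_subset_uIcc Set.uIoc_subset_uIcc))]
  calc 4 * (η₀ - η) = ∫ _ in η..η₀, (4 : ℝ) := by simp [mul_comm]
    _ ≤ ∫ ζ in η..η₀, ∫ θ in 0..2 * π, rho (b η) θ / rho (b ζ) θ ^ 3 :=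
        integral_mono_on hη.le intervalIntegrable_const
          ((continuous_parametric_intervalIntegral_of_continuous'
            (f := fun ζ θ => rho (b η) θ / rho (b ζ) θ ^ 3)
            (Continuous.div (by fun_prop) (by fun_prop) fun p => rho_pow_three_ne_zero _ _)
            0 (2 * π)).intervalIntegrable _ _)
          fun ζ _ => four_le_integral_rho_div_rho_pow_three _ _
end

section
/- Let b : ℝ → ℝ be continuous and let η < η₀ be real numbers. Define ρ(θ,ζ) = √(cos²θ·e^{−2b(ζ)} + sin²θ·e^{2b(ζ)}) and K(θ) = ∫_η^{η₀} ρ(θ,ζ)^{−3} dζ, so that ∂x/∂θ = −sinθ·K(θ) is the angular derivative of the conformal light-cone coordinate x. Then ∫₀^{2π} |∂x/∂θ| dθ = ∫₀^{2π} |sinθ|·K(θ) dθ = 4·∫_η^{η₀} e^{−b(s)} ds. -/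
/-!
By Fubini (the integrand is continuous on a compact rectangle) it suffices to do the θ-integral
for fixed ζ. Writing `A = e^{-2b(ζ)}`, `C = e^{2b(ζ)}`, the function
`-cos θ / (C √(cos²θ A + sin²θ C))` is an antiderivative of `sin θ (cos²θ A + sin²θ C)^{-3/2}`,
and the integrand `|sin θ| (cos²θ A + sin²θ C)^{-3/2}` is `π`-periodic, so its integral over
`[0, 2π]` is `2 · 2/(C√A) = 4 e^{-b(ζ)}`.
-/

open Real intervalIntegral

section AngularIntegral

variable {A C : ℝ}

lemma cos_sq_mul_add_sin_sq_mul_pos (hA : 0 < A) (hC : 0 < C) (θ : ℝ) :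
    0 < cos θ ^ 2 * A + sin θ ^ 2 * C := by
  nlinarith [sin_sq_add_cos_sq θ, lt_min hA hC,
    mul_le_mul_of_nonneg_left (min_le_left A C) (sq_nonneg (cos θ)),
    mul_le_mul_of_nonneg_left (min_le_right A C) (sq_nonneg (sin θ))]

lemma hasDerivAt_neg_cos_div_sqrt (hA : 0 < A) (hC : 0 < C) (θ : ℝ) :
    HasDerivAt (fun x => -cos x / (C * √(cos x ^ 2 * A + sin x ^ 2 * C)))
      (sin θ / √(cos θ ^ 2 * A + sin θ ^ 2 * C) ^ 3) θ := by
  have hg := cos_sq_mul_add_sin_sq_mul_pos hA hC θ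
  have hg' : HasDerivAt (fun x => cos x ^ 2 * A + sin x ^ 2 * C)
      (2 * sin θ * cos θ * (C - A)) θ :=
    ((((hasDerivAt_cos θ).pow 2).mul_const A).add
      (((hasDerivAt_sin θ).pow 2).mul_const C)).congr_deriv (by simp; ring)
  have hs : √(cos θ ^ 2 * A + sin θ ^ 2 * C) ^ 2 = cos θ ^ 2 * A + sin θ ^ 2 * C := sq_sqrt hg.le
  have hs0 : 0 < √(cos θ ^ 2 * A + sin θ ^ 2 * C) := sqrt_pos.2 hg
  refine ((hasDerivAt_cos θ).fun_neg.div ((hg'.sqrt hg.ne').const_mul C)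
    (by positivity)).congr_deriv ?_
  field_simp
  linear_combination sin θ * hs + sin θ * C * sin_sq_add_cos_sq θ

lemma integral_sin_div_sqrt_pow_three (hA : 0 < A) (hC : 0 < C) :
    ∫ θ in (0:ℝ)..π, sin θ / √(cos θ ^ 2 * A + sin θ ^ 2 * C) ^ 3 = 2 / (C * √A) := by
  have hcont : Continuous fun θ => sin θ / √(cos θ ^ 2 * A + sin θ ^ 2 * C) ^ 3 :=
    continuous_sin.div (by fun_prop)
      fun θ => (pow_pos (sqrt_pos.2 (cos_sq_mul_add_sin_sq_mul_pos hA hC θ)) 3).ne'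
  rw [integral_eq_sub_of_hasDerivAt (fun θ _ => hasDerivAt_neg_cos_div_sqrt hA hC θ)
    (hcont.intervalIntegrable _ _)]
  simp only [cos_pi, sin_pi, cos_zero, sin_zero]
  ring_nf

lemma integral_abs_sin_div_sqrt_pow_three (hA : 0 < A) (hC : 0 < C) :
    ∫ θ in (0:ℝ)..2 * π, |sin θ| / √(cos θ ^ 2 * A + sin θ ^ 2 * C) ^ 3 = 4 / (C * √A) := by
  set f := fun θ => |sin θ| / √(cos θ ^ 2 * A + sin θ ^ 2 * C) ^ 3
  have hf : Function.Periodic f π := fun θ => by simp [f, sin_add_pi, cos_add_pi]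
  have hcont : Continuous f := (continuous_abs.comp continuous_sin).div (by fun_prop)
    fun θ => (pow_pos (sqrt_pos.2 (cos_sq_mul_add_sin_sq_mul_pos hA hC θ)) 3).ne'
  have hhalf : ∫ θ in (0:ℝ)..π, f θ = 2 / (C * √A) := by
    rw [← integral_sin_div_sqrt_pow_three hA hC]
    refine integral_congr fun θ hθ => ?_
    rw [Set.uIcc_of_le pi_nonneg] at hθ
    simp only [f, abs_of_nonneg (sin_nonneg_of_nonneg_of_le_pi hθ.1 hθ.2)]
  rw [two_mul, hf.intervalIntegral_add_eq_add 0 π fun _ _ => hcont.intervalIntegrable _ _,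
    zero_add, hhalf]
  ring

end AngularIntegral

lemma integral_abs_sin_div_sqrt_exp_pow_three (B : ℝ) :
    ∫ θ in (0:ℝ)..2 * π, |sin θ| / √(cos θ ^ 2 * exp (-(2 * B)) + sin θ ^ 2 * exp (2 * B)) ^ 3
      = 4 * exp (-B) := by
  rw [integral_abs_sin_div_sqrt_pow_three (exp_pos _) (exp_pos _), ← exp_half, ← exp_add,
    exp_neg]
  ring_nf

/-- Exact angular integral identity for conformal light-cone coordinates in a
1+2-dimensional Bianchi I spacetime:
`∫₀^{2π} |∂x/∂θ| dθ = ∫₀^{2π} |sinθ|·K(θ) dθ = 4∫_η^{η₀} e^{−b(s)} ds`. -/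
theorem stmt_8 (b : ℝ → ℝ) (hb : Continuous b) (η η₀ : ℝ) (hη : η < η₀)
    (ρ : ℝ → ℝ → ℝ)
    (hρ : ∀ θ ζ, ρ θ ζ = Real.sqrt ((Real.cos θ) ^ 2 * Real.exp (-(2 * b ζ)) +
      (Real.sin θ) ^ 2 * Real.exp (2 * b ζ)))
    (K : ℝ → ℝ)
    (hK : ∀ θ, K θ = ∫ ζ in η..η₀, 1 / (ρ θ ζ) ^ 3) :
    (∫ θ in (0:ℝ)..(2 * π), |(-Real.sin θ) * K θ|) =
      ∫ θ in (0:ℝ)..(2 * π), |Real.sin θ| * K θ ∧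
    (∫ θ in (0:ℝ)..(2 * π), |Real.sin θ| * K θ) =
      4 * ∫ s in η..η₀, Real.exp (-(b s)) := by
  have hρ_pos : ∀ θ ζ, 0 < ρ θ ζ ^ 3 := fun θ ζ => hρ θ ζ ▸
    pow_pos (sqrt_pos.2 (cos_sq_mul_add_sin_sq_mul_pos (exp_pos _) (exp_pos _) θ)) 3
  have hK_nonneg : ∀ θ, 0 ≤ K θ := fun θ =>
    hK θ ▸ integral_nonneg hη.le fun ζ _ => (one_div_pos.2 (hρ_pos θ ζ)).le
  refine ⟨integral_congr fun θ _ => by rw [abs_mul, abs_neg, abs_of_nonneg (hK_nonneg θ)], ?_⟩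
  have hcont : Continuous fun p : ℝ × ℝ => |sin p.1| / ρ p.1 p.2 ^ 3 := by
    simp only [hρ]
    exact Continuous.div (by fun_prop) (by fun_prop) fun p => hρ p.1 p.2 ▸ (hρ_pos p.1 p.2).ne'
  calc ∫ θ in (0:ℝ)..2 * π, |sin θ| * K θ
      = ∫ θ in (0:ℝ)..2 * π, ∫ ζ in η..η₀, |sin θ| / ρ θ ζ ^ 3 := by
        simp only [hK, ← integral_const_mul, mul_one_div]
    _ = ∫ ζ in η..η₀, ∫ θ in (0:ℝ)..2 * π, |sin θ| / ρ θ ζ ^ 3 :=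
        MeasureTheory.intervalIntegral_intervalIntegral_swap <|
          (hcont.continuousOn.integrableOn_compact (isCompact_uIcc.prod isCompact_uIcc)).mono_set
            (Set.prod_mono Set.uIoc_subset_uIcc Set.uIoc_subset_uIcc)
    _ = ∫ ζ in η..η₀, 4 * exp (-b ζ) := by
        simp only [hρ, integral_abs_sin_div_sqrt_exp_pow_three]
    _ = 4 * ∫ s in η..η₀, exp (-b s) := integral_const_mul _ _
end

section
/- Let b : ℝ → ℝ be infinitely differentiable and fix η ∈ ℝ. Define ρ(θ,ζ) = √(cos²θ·e^{−2b(ζ)} + sin²θ·e^{2b(ζ)}), K(θ,χ) = ∫_η^{η+χ} ρ(θ,ζ)^{−3} dζ, and L(χ) = ∫₀^{2π} √(e^{2b(η)}·sin²θ + e^{−2b(η)}·cos²θ)·K(θ,χ) dθ. Then L(χ) = 2πχ + O(χ³) as χ → 0⁺; i.e., there exist constants C > 0 and δ > 0 such that |L(χ) − 2πχ| ≤ C·χ³ for all χ ∈ (0,δ). -/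
open Real Filter intervalIntegral

lemma denom_pos (a c : ℝ) (ha : 0 < a) (hc : 0 < c) (θ : ℝ) :
    0 < a * Real.cos θ ^ 2 + c * Real.sin θ ^ 2 := by
  have hs := sin_sq_add_cos_sq θ
  rcases le_total a c with h | h
  · have key : a * Real.cos θ ^ 2 + c * Real.sin θ ^ 2
        = a + (c - a) * Real.sin θ ^ 2 := by linear_combination a * hs
    rw [key]
    have := mul_nonneg (sub_nonneg.2 h) (sq_nonneg (Real.sin θ)); linarith
  · have key : a * Real.cos θ ^ 2 + c * Real.sin θ ^ 2
        = c + (a - c) * Real.cos θ ^ 2 := by linear_combination c * hs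
    rw [key]
    have := mul_nonneg (sub_nonneg.2 h) (sq_nonneg (Real.cos θ)); linarith

lemma hasDerivAt_F (k : ℝ) (hk : 0 < k) (θ : ℝ) :
    HasDerivAt (fun θ : ℝ => θ + Real.arctan ((k - 1) * (Real.sin θ * Real.cos θ) /
      (Real.cos θ ^ 2 + k * Real.sin θ ^ 2)))
      (k / (Real.cos θ ^ 2 + k ^ 2 * Real.sin θ ^ 2)) θ := by
  have hDpos : 0 < Real.cos θ ^ 2 + k * Real.sin θ ^ 2 := by
    have := denom_pos 1 k one_pos hk θ; linarith [this]
  have hD : (Real.cos θ ^ 2 + k * Real.sin θ ^ 2) ≠ 0 := hDpos.ne'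
  have hQpos : 0 < Real.cos θ ^ 2 + k ^ 2 * Real.sin θ ^ 2 := by
    have := denom_pos 1 (k ^ 2) one_pos (by positivity) θ; linarith [this]
  have hN : HasDerivAt (fun θ : ℝ => (k - 1) * (Real.sin θ * Real.cos θ))
      ((k - 1) * (Real.cos θ ^ 2 - Real.sin θ ^ 2)) θ := by
    have := ((Real.hasDerivAt_sin θ).mul (Real.hasDerivAt_cos θ)).const_mul (k - 1)
    refine this.congr_deriv ?_; symm; ring
  have hDd : HasDerivAt (fun θ : ℝ => Real.cos θ ^ 2 + k * Real.sin θ ^ 2)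
      (2 * (k - 1) * (Real.sin θ * Real.cos θ)) θ := by
    have h1 := (Real.hasDerivAt_cos θ).pow 2
    have h2 := ((Real.hasDerivAt_sin θ).pow 2).const_mul k
    refine (h1.add h2).congr_deriv ?_; symm; ring
  have hq := hN.div hDd hD
  have harc := (Real.hasDerivAt_arctan (((k - 1) * (Real.sin θ * Real.cos θ)) /
      (Real.cos θ ^ 2 + k * Real.sin θ ^ 2))).comp θ hq
  have hfull := (hasDerivAt_id θ).add harc
  have hs := sin_sq_add_cos_sq θ
  have h1 : (Real.cos θ ^ 2 + k * Real.sin θ ^ 2) ^ 2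
      + ((k - 1) * (Real.sin θ * Real.cos θ)) ^ 2
      = Real.cos θ ^ 2 + k ^ 2 * Real.sin θ ^ 2 := by
    linear_combination (Real.cos θ ^ 2 + k ^ 2 * Real.sin θ ^ 2) * hs
  have h2 : (k - 1) * (Real.cos θ ^ 2 - Real.sin θ ^ 2) * (Real.cos θ ^ 2 + k * Real.sin θ ^ 2)
      - (k - 1) * (Real.sin θ * Real.cos θ) * (2 * (k - 1) * (Real.sin θ * Real.cos θ))
      = k - (Real.cos θ ^ 2 + k ^ 2 * Real.sin θ ^ 2) := by
    linear_combination ((k - 1) * (Real.cos θ ^ 2 + 1 - Real.sin θ ^ 2)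
      - (k - 1) ^ 2 * Real.sin θ ^ 2 + 1) * hs
  have h3 : 1 + ((k - 1) * (Real.sin θ * Real.cos θ)
      / (Real.cos θ ^ 2 + k * Real.sin θ ^ 2)) ^ 2
      = (Real.cos θ ^ 2 + k ^ 2 * Real.sin θ ^ 2)
        / (Real.cos θ ^ 2 + k * Real.sin θ ^ 2) ^ 2 := by
    rw [div_pow, ← h1]; field_simp
  refine hfull.congr_deriv ?_; symm
  rw [h3, h2]
  field_simp
  ring

lemma circ_int_one (k : ℝ) (hk : 0 < k) :
    ∫ θ in (0:ℝ)..(2 * π), k / (Real.cos θ ^ 2 + k ^ 2 * Real.sin θ ^ 2) = 2 * π := by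
  have hcont : Continuous fun θ : ℝ => k / (Real.cos θ ^ 2 + k ^ 2 * Real.sin θ ^ 2) := by
    apply continuous_const.div (by continuity)
    intro θ
    have := denom_pos 1 (k ^ 2) one_pos (by positivity) θ
    intro h; rw [show (1:ℝ) * Real.cos θ ^ 2 = Real.cos θ ^ 2 by ring] at this; linarith
  rw [intervalIntegral.integral_eq_sub_of_hasDerivAt
    (fun θ _ => hasDerivAt_F k hk θ) (hcont.intervalIntegrable _ _)]
  simp [Real.sin_two_pi, Real.cos_two_pi]

lemma hasDerivAt_G (A C : ℝ) (hA : 0 < A) (hC : 0 < C) (θ : ℝ) :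
    HasDerivAt (fun θ : ℝ => Real.sin θ * Real.cos θ / (A * Real.cos θ ^ 2 + C * Real.sin θ ^ 2))
      ((A * Real.cos θ ^ 2 - C * Real.sin θ ^ 2) / (A * Real.cos θ ^ 2 + C * Real.sin θ ^ 2) ^ 2)
      θ := by
  have hDpos := denom_pos A C hA hC θ
  have hN : HasDerivAt (fun θ : ℝ => Real.sin θ * Real.cos θ)
      (Real.cos θ ^ 2 - Real.sin θ ^ 2) θ := by
    have := (Real.hasDerivAt_sin θ).mul (Real.hasDerivAt_cos θ); refine this.congr_deriv ?_; symm; ring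
  have hDd : HasDerivAt (fun θ : ℝ => A * Real.cos θ ^ 2 + C * Real.sin θ ^ 2)
      (2 * (C - A) * (Real.sin θ * Real.cos θ)) θ := by
    have h1 := ((Real.hasDerivAt_cos θ).pow 2).const_mul A
    have h2 := ((Real.hasDerivAt_sin θ).pow 2).const_mul C
    refine (h1.add h2).congr_deriv ?_; symm; ring
  have := hN.div hDd hDpos.ne'
  refine this.congr_deriv ?_; symm
  have hs := sin_sq_add_cos_sq θ
  have h2 : (Real.cos θ ^ 2 - Real.sin θ ^ 2) * (A * Real.cos θ ^ 2 + C * Real.sin θ ^ 2)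
      - Real.sin θ * Real.cos θ * (2 * (C - A) * (Real.sin θ * Real.cos θ))
      = A * Real.cos θ ^ 2 - C * Real.sin θ ^ 2 := by
    linear_combination (A * Real.cos θ ^ 2 - C * Real.sin θ ^ 2) * hs
  rw [h2]

lemma circ_int_two (A C : ℝ) (hA : 0 < A) (hC : 0 < C) :
    ∫ θ in (0:ℝ)..(2 * π),
      (A * Real.cos θ ^ 2 - C * Real.sin θ ^ 2) / (A * Real.cos θ ^ 2 + C * Real.sin θ ^ 2) ^ 2
      = 0 := by
  have hcont : Continuous fun θ : ℝ =>
      (A * Real.cos θ ^ 2 - C * Real.sin θ ^ 2)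
        / (A * Real.cos θ ^ 2 + C * Real.sin θ ^ 2) ^ 2 := by
    apply Continuous.div (by continuity) (by continuity)
    intro θ; exact pow_ne_zero _ (denom_pos A C hA hC θ).ne'
  rw [intervalIntegral.integral_eq_sub_of_hasDerivAt
    (fun θ _ => hasDerivAt_G A C hA hC θ) (hcont.intervalIntegrable _ _)]
  simp [Real.sin_two_pi]
noncomputable def pf (b : ℝ → ℝ) (θ ζ : ℝ) : ℝ :=
  Real.cos θ ^ 2 * Real.exp (-(2 * b ζ)) + Real.sin θ ^ 2 * Real.exp (2 * b ζ)

noncomputable def p1f (b : ℝ → ℝ) (θ ζ : ℝ) : ℝ :=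
  2 * deriv b ζ * (Real.sin θ ^ 2 * Real.exp (2 * b ζ) - Real.cos θ ^ 2 * Real.exp (-(2 * b ζ)))

noncomputable def p2f (b : ℝ → ℝ) (θ ζ : ℝ) : ℝ :=
  2 * deriv (deriv b) ζ *
      (Real.sin θ ^ 2 * Real.exp (2 * b ζ) - Real.cos θ ^ 2 * Real.exp (-(2 * b ζ)))
    + 4 * (deriv b ζ) ^ 2 *
      (Real.sin θ ^ 2 * Real.exp (2 * b ζ) + Real.cos θ ^ 2 * Real.exp (-(2 * b ζ)))

noncomputable def ff (b : ℝ → ℝ) (θ ζ : ℝ) : ℝ := 1 / (Real.sqrt (pf b θ ζ)) ^ 3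

noncomputable def f1f (b : ℝ → ℝ) (θ ζ : ℝ) : ℝ :=
  -(3 / 2) * p1f b θ ζ / ((pf b θ ζ) ^ 2 * Real.sqrt (pf b θ ζ))

noncomputable def f2f (b : ℝ → ℝ) (θ ζ : ℝ) : ℝ :=
  -(3 / 2) * p2f b θ ζ / ((pf b θ ζ) ^ 2 * Real.sqrt (pf b θ ζ))
    + (15 / 4) * (p1f b θ ζ) ^ 2 / ((pf b θ ζ) ^ 3 * Real.sqrt (pf b θ ζ))

lemma pf_pos (b : ℝ → ℝ) (θ ζ : ℝ) : 0 < pf b θ ζ := by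
  have h := denom_pos (Real.exp (-(2 * b ζ))) (Real.exp (2 * b ζ))
    (Real.exp_pos _) (Real.exp_pos _) θ
  unfold pf; linarith [h]

lemma hb1 {b : ℝ → ℝ} (hb : ContDiff ℝ (⊤ : ℕ∞) b) : ContDiff ℝ (⊤ : ℕ∞) (deriv b) :=
  (contDiff_infty_iff_deriv.mp (hb.of_le (by simp))).2

lemma hasDerivAt_b {b : ℝ → ℝ} (hb : ContDiff ℝ (⊤ : ℕ∞) b) (ζ : ℝ) :
    HasDerivAt b (deriv b ζ) ζ :=
  (hb.differentiable (by simp) ζ).hasDerivAt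

lemma hasDerivAt_db {b : ℝ → ℝ} (hb : ContDiff ℝ (⊤ : ℕ∞) b) (ζ : ℝ) :
    HasDerivAt (deriv b) (deriv (deriv b) ζ) ζ :=
  ((hb1 hb).differentiable (by simp) ζ).hasDerivAt

lemma hasDerivAt_expP {b : ℝ → ℝ} (hb : ContDiff ℝ (⊤ : ℕ∞) b) (ζ : ℝ) :
    HasDerivAt (fun ζ => Real.exp (2 * b ζ))
      (2 * deriv b ζ * Real.exp (2 * b ζ)) ζ := by
  have := ((hasDerivAt_b hb ζ).const_mul 2).exp
  convert this using 1; ring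

lemma hasDerivAt_expM {b : ℝ → ℝ} (hb : ContDiff ℝ (⊤ : ℕ∞) b) (ζ : ℝ) :
    HasDerivAt (fun ζ => Real.exp (-(2 * b ζ)))
      (-(2 * deriv b ζ) * Real.exp (-(2 * b ζ))) ζ := by
  have := (((hasDerivAt_b hb ζ).const_mul 2).neg).exp
  refine this.congr_deriv ?_; symm; simp only [Pi.neg_apply]; ring

lemma hasDerivAt_pf {b : ℝ → ℝ} (hb : ContDiff ℝ (⊤ : ℕ∞) b) (θ ζ : ℝ) :
    HasDerivAt (fun ζ => pf b θ ζ) (p1f b θ ζ) ζ := by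
  have h1 := ((hasDerivAt_expM hb ζ).const_mul (Real.cos θ ^ 2)).add
    ((hasDerivAt_expP hb ζ).const_mul (Real.sin θ ^ 2))
  unfold pf p1f; refine h1.congr_deriv ?_; symm; ring

lemma hasDerivAt_p1f {b : ℝ → ℝ} (hb : ContDiff ℝ (⊤ : ℕ∞) b) (θ ζ : ℝ) :
    HasDerivAt (fun ζ => p1f b θ ζ) (p2f b θ ζ) ζ := by
  have hin : HasDerivAt (fun ζ => Real.sin θ ^ 2 * Real.exp (2 * b ζ)
      - Real.cos θ ^ 2 * Real.exp (-(2 * b ζ)))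
      (Real.sin θ ^ 2 * (2 * deriv b ζ * Real.exp (2 * b ζ))
        - Real.cos θ ^ 2 * (-(2 * deriv b ζ) * Real.exp (-(2 * b ζ)))) ζ :=
    ((hasDerivAt_expP hb ζ).const_mul (Real.sin θ ^ 2)).sub
      ((hasDerivAt_expM hb ζ).const_mul (Real.cos θ ^ 2))
  have h := (((hasDerivAt_db hb ζ).const_mul 2).mul hin)
  unfold p1f p2f; refine h.congr_deriv ?_; symm; ring

lemma hasDerivAt_sqrt_pf {b : ℝ → ℝ} (hb : ContDiff ℝ (⊤ : ℕ∞) b) (θ ζ : ℝ) :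
    HasDerivAt (fun ζ => Real.sqrt (pf b θ ζ))
      (p1f b θ ζ / (2 * Real.sqrt (pf b θ ζ))) ζ := by
  have h := (Real.hasDerivAt_sqrt (pf_pos b θ ζ).ne').comp ζ (hasDerivAt_pf hb θ ζ)
  refine h.congr_deriv ?_; symm
  field_simp

lemma hasDerivAt_ff {b : ℝ → ℝ} (hb : ContDiff ℝ (⊤ : ℕ∞) b) (θ ζ : ℝ) :
    HasDerivAt (fun ζ => ff b θ ζ) (f1f b θ ζ) ζ := by
  have hp := pf_pos b θ ζ
  have hs0 : Real.sqrt (pf b θ ζ) ≠ 0 := (Real.sqrt_pos.mpr hp).ne'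
  have hcube : (Real.sqrt (pf b θ ζ)) ^ 3 ≠ 0 := pow_ne_zero _ hs0
  have h := ((hasDerivAt_sqrt_pf hb θ ζ).pow 3).inv hcube
  have heq : (fun ζ => ff b θ ζ) = (fun ζ => ((Real.sqrt (pf b θ ζ)) ^ 3)⁻¹) := by
    funext ζ; exact one_div _
  rw [heq]
  refine h.congr_deriv ?_; symm; simp only [Pi.pow_apply]
  unfold f1f
  set P := pf b θ ζ with hP
  set s := Real.sqrt P with hsdef
  have h2 : s ^ 2 = P := Real.sq_sqrt hp.le
  rw [← h2]
  field_simp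
  ring

lemma hasDerivAt_f1f {b : ℝ → ℝ} (hb : ContDiff ℝ (⊤ : ℕ∞) b) (θ ζ : ℝ) :
    HasDerivAt (fun ζ => f1f b θ ζ) (f2f b θ ζ) ζ := by
  have hp := pf_pos b θ ζ
  have hs0 : Real.sqrt (pf b θ ζ) ≠ 0 := (Real.sqrt_pos.mpr hp).ne'
  have hden : (pf b θ ζ) ^ 2 * Real.sqrt (pf b θ ζ) ≠ 0 :=
    mul_ne_zero (pow_ne_zero _ hp.ne') hs0
  have hnum : HasDerivAt (fun ζ => -(3 / 2 : ℝ) * p1f b θ ζ)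
      (-(3 / 2) * p2f b θ ζ) ζ := (hasDerivAt_p1f hb θ ζ).const_mul _
  have hd : HasDerivAt (fun ζ => (pf b θ ζ) ^ 2 * Real.sqrt (pf b θ ζ))
      ((2 * pf b θ ζ * p1f b θ ζ) * Real.sqrt (pf b θ ζ)
        + (pf b θ ζ) ^ 2 * (p1f b θ ζ / (2 * Real.sqrt (pf b θ ζ)))) ζ := by
    have h1 := (hasDerivAt_pf hb θ ζ).pow 2
    have h2 := hasDerivAt_sqrt_pf hb θ ζ
    have := h1.mul h2
    refine this.congr_deriv ?_; symm; simp only [Pi.pow_apply]; ring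
  have h := hnum.div hd hden
  refine h.congr_deriv ?_; symm
  unfold f2f
  set P := pf b θ ζ with hP
  set s := Real.sqrt P with hsdef
  have h2 : s ^ 2 = P := Real.sq_sqrt hp.le
  rw [← h2]
  field_simp
  ring
section cont
variable {b : ℝ → ℝ}

lemma cont_pf (hbc : Continuous b) : Continuous fun q : ℝ × ℝ => pf b q.1 q.2 := by
  unfold pf; fun_prop

lemma cont_sqrt_pf (hbc : Continuous b) :
    Continuous fun q : ℝ × ℝ => Real.sqrt (pf b q.1 q.2) :=
  Real.continuous_sqrt.comp (cont_pf hbc)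

lemma sqrt_pf_ne (θ ζ : ℝ) : Real.sqrt (pf b θ ζ) ≠ 0 :=
  (Real.sqrt_pos.mpr (pf_pos b θ ζ)).ne'

lemma cont_ff (hbc : Continuous b) : Continuous fun q : ℝ × ℝ => ff b q.1 q.2 := by
  unfold ff
  exact continuous_const.div ((cont_sqrt_pf hbc).pow 3)
    fun q => pow_ne_zero _ (sqrt_pf_ne q.1 q.2)

lemma cont_p1f (hbc : Continuous b) (hbc1 : Continuous (deriv b)) :
    Continuous fun q : ℝ × ℝ => p1f b q.1 q.2 := by
  unfold p1f; fun_prop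

lemma cont_p2f (hbc : Continuous b) (hbc1 : Continuous (deriv b))
    (hbc2 : Continuous (deriv (deriv b))) :
    Continuous fun q : ℝ × ℝ => p2f b q.1 q.2 := by
  unfold p2f; fun_prop

lemma den_ne (θ ζ : ℝ) (n : ℕ) : (pf b θ ζ) ^ n * Real.sqrt (pf b θ ζ) ≠ 0 :=
  mul_ne_zero (pow_ne_zero _ (pf_pos b θ ζ).ne') (sqrt_pf_ne θ ζ)

lemma cont_f1f (hbc : Continuous b) (hbc1 : Continuous (deriv b)) :
    Continuous fun q : ℝ × ℝ => f1f b q.1 q.2 := by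
  unfold f1f
  exact (continuous_const.mul (cont_p1f hbc hbc1)).div
    (((cont_pf hbc).pow 2).mul (cont_sqrt_pf hbc)) fun q => den_ne q.1 q.2 2

lemma cont_f2f (hbc : Continuous b) (hbc1 : Continuous (deriv b))
    (hbc2 : Continuous (deriv (deriv b))) :
    Continuous fun q : ℝ × ℝ => f2f b q.1 q.2 := by
  unfold f2f
  apply Continuous.add
  · exact (continuous_const.mul (cont_p2f hbc hbc1 hbc2)).div
      (((cont_pf hbc).pow 2).mul (cont_sqrt_pf hbc)) fun q => den_ne q.1 q.2 2
  · exact (continuous_const.mul ((cont_p1f hbc hbc1).pow 2)).div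
      (((cont_pf hbc).pow 3).mul (cont_sqrt_pf hbc)) fun q => den_ne q.1 q.2 3

lemma cont_pf_left {b : ℝ → ℝ} (hbc : Continuous b) (ζ : ℝ) :
    Continuous fun θ => pf b θ ζ := by unfold pf; fun_prop

lemma cont_pf_right {b : ℝ → ℝ} (hbc : Continuous b) (θ : ℝ) :
    Continuous fun ζ => pf b θ ζ := by unfold pf; fun_prop

lemma cont_ff_left {b : ℝ → ℝ} (hbc : Continuous b) (ζ : ℝ) :
    Continuous fun θ => ff b θ ζ := by
  unfold ff
  exact continuous_const.div (((cont_pf_left hbc ζ).sqrt).pow 3)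
    fun θ => pow_ne_zero _ (sqrt_pf_ne θ ζ)

lemma cont_ff_right {b : ℝ → ℝ} (hbc : Continuous b) (θ : ℝ) :
    Continuous fun ζ => ff b θ ζ := by
  unfold ff
  exact continuous_const.div (((cont_pf_right hbc θ).sqrt).pow 3)
    fun ζ => pow_ne_zero _ (sqrt_pf_ne θ ζ)

lemma cont_p1f_left {b : ℝ → ℝ} (hbc : Continuous b) (hbc1 : Continuous (deriv b)) (ζ : ℝ) :
    Continuous fun θ => p1f b θ ζ := by unfold p1f; fun_prop

lemma cont_f1f_left {b : ℝ → ℝ} (hbc : Continuous b) (hbc1 : Continuous (deriv b)) (ζ : ℝ) :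
    Continuous fun θ => f1f b θ ζ := by
  unfold f1f
  exact (continuous_const.mul (cont_p1f_left hbc hbc1 ζ)).div
    (((cont_pf_left hbc ζ).pow 2).mul ((cont_pf_left hbc ζ).sqrt))
    fun θ => den_ne θ ζ 2

end cont
lemma hb2 {b : ℝ → ℝ} (hb : ContDiff ℝ (⊤ : ℕ∞) b) : Continuous (deriv (deriv b)) :=
  ((contDiff_infty_iff_deriv.mp (hb1 hb)).2).continuous

lemma I1 (b : ℝ → ℝ) (η : ℝ) :
    (∫ θ in (0:ℝ)..(2 * π), Real.sqrt (pf b θ η) * ff b θ η) = 2 * π := by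
  have hpt : ∀ θ : ℝ, Real.sqrt (pf b θ η) * ff b θ η
      = Real.exp (2 * b η) / (Real.cos θ ^ 2 + (Real.exp (2 * b η)) ^ 2 * Real.sin θ ^ 2) := by
    intro θ
    have hp := pf_pos b θ η
    have hexp : Real.exp (2 * b η) * Real.exp (-(2 * b η)) = 1 := by
      rw [← Real.exp_add]; simp
    have hkP : Real.cos θ ^ 2 + (Real.exp (2 * b η)) ^ 2 * Real.sin θ ^ 2
        = Real.exp (2 * b η) * pf b θ η := by
      unfold pf; linear_combination (-(Real.cos θ ^ 2)) * hexp
    unfold ff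
    rw [hkP]
    set P := pf b θ η with hPd
    set s := Real.sqrt P with hsd
    have h2 : s ^ 2 = P := Real.sq_sqrt hp.le
    have hs0 : s ≠ 0 := by rw [hsd]; exact (Real.sqrt_pos.mpr hp).ne'
    rw [← h2]
    field_simp
  rw [intervalIntegral.integral_congr (fun θ _ => hpt θ)]
  exact circ_int_one _ (Real.exp_pos _)

lemma I2 (b : ℝ → ℝ) (η : ℝ) :
    (∫ θ in (0:ℝ)..(2 * π), Real.sqrt (pf b θ η) * f1f b θ η) = 0 := by
  set A := Real.exp (-(2 * b η)) with hA
  set C := Real.exp (2 * b η) with hC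
  have hpt : ∀ θ : ℝ, Real.sqrt (pf b θ η) * f1f b θ η
      = (3 * deriv b η) * ((A * Real.cos θ ^ 2 - C * Real.sin θ ^ 2)
        / (A * Real.cos θ ^ 2 + C * Real.sin θ ^ 2) ^ 2) := by
    intro θ
    have hp := pf_pos b θ η
    have hPform : A * Real.cos θ ^ 2 + C * Real.sin θ ^ 2 = pf b θ η := by
      unfold pf; rw [hA, hC]; ring
    rw [hPform]
    unfold f1f p1f
    set P := pf b θ η with hPd
    set s := Real.sqrt P with hsd
    have h2 : s ^ 2 = P := Real.sq_sqrt hp.le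
    have hs0 : s ≠ 0 := by rw [hsd]; exact (Real.sqrt_pos.mpr hp).ne'
    have hCA : Real.sin θ ^ 2 * Real.exp (2 * b η) - Real.cos θ ^ 2 * Real.exp (-(2 * b η))
        = C * Real.sin θ ^ 2 - A * Real.cos θ ^ 2 := by rw [hA, hC]; ring
    rw [hCA, ← h2]
    field_simp
    ring
  rw [intervalIntegral.integral_congr (fun θ _ => hpt θ)]
  rw [intervalIntegral.integral_const_mul,
    circ_int_two A C (by rw [hA]; exact Real.exp_pos _) (by rw [hC]; exact Real.exp_pos _)]
  ring

set_option maxHeartbeats 2000000 in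
/-- Small-χ expansion of the (rescaled) length of the constant-η light-cone slice in a
1+2-dimensional Bianchi I spacetime: `L(χ) = 2πχ + O(χ³)` as `χ → 0⁺`. -/
theorem stmt_9 (b : ℝ → ℝ) (hb : ContDiff ℝ (⊤ : ℕ∞) b) (η : ℝ)
    (ρ : ℝ → ℝ → ℝ)
    (hρ : ∀ θ ζ, ρ θ ζ = Real.sqrt ((Real.cos θ) ^ 2 * Real.exp (-(2 * b ζ)) +
      (Real.sin θ) ^ 2 * Real.exp (2 * b ζ)))
    (K : ℝ → ℝ → ℝ)
    (hK : ∀ θ χ, K θ χ = ∫ ζ in η..(η + χ), 1 / (ρ θ ζ) ^ 3)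
    (L : ℝ → ℝ)
    (hL : ∀ χ, L χ = ∫ θ in (0:ℝ)..(2 * π),
      Real.sqrt (Real.exp (2 * b η) * (Real.sin θ) ^ 2 +
        Real.exp (-(2 * b η)) * (Real.cos θ) ^ 2) * K θ χ) :
    ∃ C > 0, ∃ δ > 0, ∀ χ ∈ Set.Ioo (0:ℝ) δ, |L χ - 2 * π * χ| ≤ C * χ ^ 3 := by
  have hπ := Real.pi_pos
  have hbc : Continuous b := hb.continuous
  have hbc1 : Continuous (deriv b) := (hb1 hb).continuous
  have hbc2 : Continuous (deriv (deriv b)) := hb2 hb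
  -- K as an integral of ff
  have hKeq : ∀ θ χ', K θ χ' = ∫ ζ in η..(η + χ'), ff b θ ζ := by
    intro θ χ'
    rw [hK]
    apply intervalIntegral.integral_congr
    intro ζ _
    simp only [hρ, ff, pf]
  -- L as an integral against √(pf · η)
  have hLeq : ∀ χ', L χ' = ∫ θ in (0:ℝ)..(2 * π), Real.sqrt (pf b θ η) * K θ χ' := by
    intro χ'
    rw [hL]
    apply intervalIntegral.integral_congr
    intro θ _
    congr 1
    unfold pf
    congr 1
    ring
  -- uniform bound for f2f on the compact set
  obtain ⟨M₀, hM₀⟩ := ((isCompact_Icc.prod isCompact_Icc :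
      IsCompact ((Set.Icc (0:ℝ) (2 * π)) ×ˢ (Set.Icc η (η + 1))))).exists_bound_of_continuousOn
    (cont_f2f hbc hbc1 hbc2).continuousOn
  set M := max M₀ 1 with hMdef
  have hM1 : (1:ℝ) ≤ M := le_max_right _ _
  have hMpos : (0:ℝ) < M := lt_of_lt_of_le one_pos hM1
  have hMbd : ∀ θ ∈ Set.Icc (0:ℝ) (2 * π), ∀ ζ ∈ Set.Icc η (η + 1), |f2f b θ ζ| ≤ M :=
    fun θ hθ ζ hζ => le_trans (hM₀ (θ, ζ) (Set.mem_prod.mpr ⟨hθ, hζ⟩)) (le_max_left _ _)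
  -- bound for √(pf θ η)
  have hcS : Continuous fun θ => Real.sqrt (pf b θ η) := (cont_pf_left hbc η).sqrt
  obtain ⟨S₀, hS₀⟩ := (isCompact_Icc :
      IsCompact (Set.Icc (0:ℝ) (2 * π))).exists_bound_of_continuousOn hcS.continuousOn
  set Sm := max S₀ 1 with hSmdef
  have hSm1 : (1:ℝ) ≤ Sm := le_max_right _ _
  have hSmpos : (0:ℝ) < Sm := lt_of_lt_of_le one_pos hSm1
  have hSbd : ∀ θ ∈ Set.Icc (0:ℝ) (2 * π), |Real.sqrt (pf b θ η)| ≤ Sm :=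
    fun θ hθ => le_trans (hS₀ θ hθ) (le_max_left _ _)
  have hprodpos : (0:ℝ) < 2 * π * Sm * M :=
    mul_pos (mul_pos (mul_pos two_pos hπ) hSmpos) hMpos
  refine ⟨2 * π * Sm * M + 1, by linarith, 1, one_pos, ?_⟩
  intro χ hχ
  obtain ⟨hχ0, hχ1⟩ := hχ
  have hle : η ≤ η + χ := by linarith
  -- pointwise Taylor bound in χ
  have key : ∀ θ ∈ Set.Icc (0:ℝ) (2 * π),
      |K θ χ - χ * ff b θ η - χ ^ 2 / 2 * f1f b θ η| ≤ M * χ ^ 3 := by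
    intro θ hθ
    have hsub : Set.Icc η (η + χ) ⊆ Set.Icc η (η + 1) :=
      Set.Icc_subset_Icc le_rfl (by linarith)
    have hstep1 := norm_image_sub_le_of_norm_deriv_le_segment'
      (f := fun ζ => f1f b θ ζ) (f' := fun ζ => f2f b θ ζ) (C := M) (a := η) (b := η + χ)
      (fun ζ _ => (hasDerivAt_f1f hb θ ζ).hasDerivWithinAt)
      (fun ζ hζ => hMbd θ hθ ζ (hsub (Set.Ico_subset_Icc_self hζ)))
    have hgd : ∀ ζ : ℝ, HasDerivAt (fun ζ => ff b θ ζ - ff b θ η - (ζ - η) * f1f b θ η)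
        (f1f b θ ζ - f1f b θ η) ζ := by
      intro ζ
      have h1 := (hasDerivAt_ff hb θ ζ).sub_const (ff b θ η)
      have h2 := ((hasDerivAt_id ζ).sub_const η).mul_const (f1f b θ η)
      have h3 := h1.sub h2
      refine h3.congr_deriv ?_; symm; ring
    have hstep2 := norm_image_sub_le_of_norm_deriv_le_segment'
      (f := fun ζ => ff b θ ζ - ff b θ η - (ζ - η) * f1f b θ η)
      (f' := fun ζ => f1f b θ ζ - f1f b θ η) (C := M * χ) (a := η) (b := η + χ)
      (fun ζ _ => (hgd ζ).hasDerivWithinAt)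
      (fun ζ hζ => by
        have h := hstep1 ζ (Set.Ico_subset_Icc_self hζ)
        have h2 : ζ - η ≤ χ := by have := hζ.2; linarith [hζ.2]
        have h3 : M * (ζ - η) ≤ M * χ := mul_le_mul_of_nonneg_left h2 hMpos.le
        exact le_trans h h3)
    have hgbound : ∀ ζ ∈ Set.Icc η (η + χ),
        |ff b θ ζ - ff b θ η - (ζ - η) * f1f b θ η| ≤ M * χ * χ := by
      intro ζ hζ
      have h : |ff b θ ζ - ff b θ η - (ζ - η) * f1f b θ η
          - (ff b θ η - ff b θ η - (η - η) * f1f b θ η)| ≤ M * χ * (ζ - η) := hstep2 ζ hζ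
      have h0 : ff b θ η - ff b θ η - (η - η) * f1f b θ η = 0 := by ring
      rw [h0, sub_zero] at h
      have h2 : ζ - η ≤ χ := by have := hζ.2; linarith [hζ.2]
      have h3 : M * χ * (ζ - η) ≤ M * χ * χ :=
        mul_le_mul_of_nonneg_left h2 (by positivity)
      exact le_trans h h3
    have hffc : Continuous fun ζ => ff b θ ζ := cont_ff_right hbc θ
    have hint_f : IntervalIntegrable (fun ζ => ff b θ ζ) MeasureTheory.volume η (η + χ) :=
      hffc.intervalIntegrable _ _
    have hint_lin : IntervalIntegrable (fun ζ => (ζ - η) * f1f b θ η)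
        MeasureTheory.volume η (η + χ) :=
      (((continuous_id.sub continuous_const).mul continuous_const)).intervalIntegrable _ _
    have hconst : (∫ ζ in η..(η + χ), ff b θ η) = χ * ff b θ η := by
      rw [intervalIntegral.integral_const, smul_eq_mul]; ring
    have hlin : (∫ ζ in η..(η + χ), (ζ - η) * f1f b θ η) = χ ^ 2 / 2 * f1f b θ η := by
      rw [intervalIntegral.integral_mul_const]
      have hid : (∫ ζ in η..(η + χ), (ζ - η)) = χ ^ 2 / 2 := by
        rw [intervalIntegral.integral_comp_sub_right (fun x => x) η, integral_id]
        ring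
      rw [hid]
    have hrepr : K θ χ - χ * ff b θ η - χ ^ 2 / 2 * f1f b θ η
        = ∫ ζ in η..(η + χ), (ff b θ ζ - ff b θ η - (ζ - η) * f1f b θ η) := by
      have e : (∫ ζ in η..(η + χ), (ff b θ ζ - ff b θ η - (ζ - η) * f1f b θ η))
          = ((∫ ζ in η..(η + χ), ff b θ ζ) - ∫ ζ in η..(η + χ), ff b θ η)
            - ∫ ζ in η..(η + χ), (ζ - η) * f1f b θ η := by
        rw [intervalIntegral.integral_sub (hint_f.sub (intervalIntegrable_const)) hint_lin,
          intervalIntegral.integral_sub hint_f intervalIntegrable_const]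
      rw [e, hconst, hlin, ← hKeq]
    rw [hrepr]
    have hbd := intervalIntegral.norm_integral_le_of_norm_le_const
      (C := M * χ * χ) (f := fun ζ => ff b θ ζ - ff b θ η - (ζ - η) * f1f b θ η)
      (a := η) (b := η + χ)
      (fun ζ hζ => by
        rw [Set.uIoc_of_le hle] at hζ
        exact hgbound ζ (Set.Ioc_subset_Icc_self hζ))
    rw [Real.norm_eq_abs] at hbd
    calc |∫ ζ in η..(η + χ), (ff b θ ζ - ff b θ η - (ζ - η) * f1f b θ η)|
        ≤ M * χ * χ * |η + χ - η| := hbd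
      _ = M * χ ^ 3 := by
          rw [show η + χ - η = χ by ring, abs_of_pos hχ0]; ring
  -- continuity of the θ-integrands
  have hcK : Continuous fun θ => K θ χ := by
    have e : (fun θ => K θ χ) = fun θ => ∫ ζ in η..(η + χ), ff b θ ζ :=
      funext fun θ => hKeq θ χ
    rw [e]
    exact intervalIntegral.continuous_parametric_intervalIntegral_of_continuous'
      (f := fun θ ζ => ff b θ ζ) (cont_ff hbc) _ _
  have hcf0 : Continuous fun θ => ff b θ η := cont_ff_left hbc η
  have hcf1θ : Continuous fun θ => f1f b θ η := cont_f1f_left hbc hbc1 η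
  have hi1 : IntervalIntegrable (fun θ => Real.sqrt (pf b θ η) * K θ χ)
      MeasureTheory.volume 0 (2 * π) := (hcS.mul hcK).intervalIntegrable _ _
  have hi2 : IntervalIntegrable (fun θ => χ * (Real.sqrt (pf b θ η) * ff b θ η))
      MeasureTheory.volume 0 (2 * π) :=
    (continuous_const.mul (hcS.mul hcf0)).intervalIntegrable _ _
  have hi3 : IntervalIntegrable (fun θ => χ ^ 2 / 2 * (Real.sqrt (pf b θ η) * f1f b θ η))
      MeasureTheory.volume 0 (2 * π) :=
    (continuous_const.mul (hcS.mul hcf1θ)).intervalIntegrable _ _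
  have hLsplit : L χ - 2 * π * χ
      = ∫ θ in (0:ℝ)..(2 * π), (Real.sqrt (pf b θ η) * K θ χ
        - χ * (Real.sqrt (pf b θ η) * ff b θ η)
        - χ ^ 2 / 2 * (Real.sqrt (pf b θ η) * f1f b θ η)) := by
    rw [intervalIntegral.integral_sub (hi1.sub hi2) hi3,
      intervalIntegral.integral_sub hi1 hi2,
      intervalIntegral.integral_const_mul, intervalIntegral.integral_const_mul,
      I1 b η, I2 b η, hLeq]
    ring
  rw [hLsplit]
  have hfinal := intervalIntegral.norm_integral_le_of_norm_le_const
    (C := Sm * (M * χ ^ 3))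
    (f := fun θ => Real.sqrt (pf b θ η) * K θ χ
        - χ * (Real.sqrt (pf b θ η) * ff b θ η)
        - χ ^ 2 / 2 * (Real.sqrt (pf b θ η) * f1f b θ η))
    (a := 0) (b := 2 * π)
    (fun θ hθ => by
      show ‖Real.sqrt (pf b θ η) * K θ χ
        - χ * (Real.sqrt (pf b θ η) * ff b θ η)
        - χ ^ 2 / 2 * (Real.sqrt (pf b θ η) * f1f b θ η)‖ ≤ Sm * (M * χ ^ 3)
      rw [Set.uIoc_of_le (by linarith : (0:ℝ) ≤ 2 * π)] at hθ
      have hIcc := Set.Ioc_subset_Icc_self hθ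
      have e : Real.sqrt (pf b θ η) * K θ χ
          - χ * (Real.sqrt (pf b θ η) * ff b θ η)
          - χ ^ 2 / 2 * (Real.sqrt (pf b θ η) * f1f b θ η)
          = Real.sqrt (pf b θ η) * (K θ χ - χ * ff b θ η - χ ^ 2 / 2 * f1f b θ η) := by ring
      rw [e, Real.norm_eq_abs, abs_mul]
      exact mul_le_mul (hSbd θ hIcc) (key θ hIcc) (abs_nonneg _) (by linarith))
  rw [Real.norm_eq_abs] at hfinal
  calc |∫ θ in (0:ℝ)..(2 * π), (Real.sqrt (pf b θ η) * K θ χ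
        - χ * (Real.sqrt (pf b θ η) * ff b θ η)
        - χ ^ 2 / 2 * (Real.sqrt (pf b θ η) * f1f b θ η))|
      ≤ Sm * (M * χ ^ 3) * |2 * π - 0| := hfinal
    _ = 2 * π * Sm * M * χ ^ 3 := by
        rw [abs_of_pos (by linarith : (0:ℝ) < 2 * π - 0)]; ring
    _ ≤ (2 * π * Sm * M + 1) * χ ^ 3 := by nlinarith [pow_pos hχ0 3]
end

section
/- Let G > 0, s ≥ 0, S_max > 0, and t₀ ∈ ℝ, and let a : [t₀,∞) → ℝ be continuously differentiable with a(t) > 0 for all t. Define h(t) = a'(t) − 2Gs/a(t)². Suppose h(t₀) > 0, and suppose that for every t₁ ≥ t₀ such that h > 0 on all of [t₀,t₁], one has (π/G)·a(t₁)²/h(t₁)² + (4/3)·π·s/h(t₁)³ ≤ S_max. Then h(t) > 0 for all t ≥ t₀; moreover h(t) ≥ a(t)·√(π/(G·S_max)) for all t ≥ t₀, so in particular a'(t) > 2Gs/a(t)² > 0 whenever s > 0, i.e., the expansion is monotonic. -/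
open Real Filter Topology

/-- If the Q-screen has a leaf at `t₀` (`h(t₀) > 0`) and generalized entropy along the
screen is bounded by `S_max`, then `h = a' − 2Gs/a²` stays positive for all later times,
is bounded below by `a·√(π/(G·S_max))`, and the expansion is monotonic. -/
theorem stmt_14 (G s Smax t₀ : ℝ) (hG : 0 < G) (hs : 0 ≤ s) (hSmax : 0 < Smax)
    (a : ℝ → ℝ)
    (ha_diff : ∀ t, t₀ ≤ t → DifferentiableAt ℝ a t)
    (ha_cont : ContinuousOn (deriv a) (Set.Ici t₀))
    (ha_pos : ∀ t, t₀ ≤ t → 0 < a t)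
    (h : ℝ → ℝ)
    (hh : ∀ t, h t = deriv a t - 2 * G * s / (a t) ^ 2)
    (h0 : 0 < h t₀)
    (hbound : ∀ t₁, t₀ ≤ t₁ → (∀ t ∈ Set.Icc t₀ t₁, 0 < h t) →
      (π / G) * (a t₁) ^ 2 / (h t₁) ^ 2 + (4 / 3) * π * s / (h t₁) ^ 3 ≤ Smax) :
    ∀ t, t₀ ≤ t → 0 < h t ∧
      a t * Real.sqrt (π / (G * Smax)) ≤ h t ∧
      (0 < s → 2 * G * s / (a t) ^ 2 < deriv a t ∧ 0 < 2 * G * s / (a t) ^ 2) := by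
  set c := Real.sqrt (π / (G * Smax)) with hc
  have hcpos : 0 < c := Real.sqrt_pos.mpr (by positivity)
  have hcsq : c ^ 2 = π / (G * Smax) := Real.sq_sqrt (by positivity)
  have haC : ContinuousOn a (Set.Ici t₀) := fun t ht =>
    (ha_diff t ht).continuousAt.continuousWithinAt
  have hhC : ContinuousOn h (Set.Ici t₀) := by
    have hC : ContinuousOn (fun t => deriv a t - 2 * G * s / (a t) ^ 2) (Set.Ici t₀) :=
      ha_cont.sub (continuousOn_const.div (haC.pow 2) (fun t ht => by
        have := ha_pos t ht; positivity))
    exact hC.congr fun t ht => hh t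
  -- lower bound from the entropy bound
  have hlow : ∀ t₁, t₀ ≤ t₁ → (∀ u ∈ Set.Icc t₀ t₁, 0 < h u) → a t₁ * c ≤ h t₁ := by
    intro t₁ ht₁ hpos
    have hh1 : 0 < h t₁ := hpos t₁ ⟨ht₁, le_refl _⟩
    have ha1 : 0 < a t₁ := ha_pos t₁ ht₁
    have hb := hbound t₁ ht₁ hpos
    have hterm : (0:ℝ) ≤ (4 / 3) * π * s / (h t₁) ^ 3 := by positivity
    have h2 : (π / G) * (a t₁) ^ 2 / (h t₁) ^ 2 ≤ Smax := by linarith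
    have e1 : (π / G) * (a t₁) ^ 2 ≤ Smax * (h t₁) ^ 2 :=
      (div_le_iff₀ (pow_pos hh1 2)).mp h2
    have e2 : π * (a t₁) ^ 2 / G ≤ Smax * (h t₁) ^ 2 := by
      rw [div_mul_eq_mul_div] at e1; exact e1
    have h3 : π * (a t₁) ^ 2 ≤ Smax * (h t₁) ^ 2 * G := (div_le_iff₀ hG).mp e2
    have h4 : (a t₁ * c) ^ 2 ≤ (h t₁) ^ 2 := by
      rw [mul_pow, hcsq]
      rw [mul_div_assoc'] -- (a²*π)/(G*Smax)
      rw [div_le_iff₀ (by positivity : (0:ℝ) < G * Smax)]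
      nlinarith
    calc a t₁ * c = Real.sqrt ((a t₁ * c) ^ 2) := (Real.sqrt_sq (by positivity)).symm
      _ ≤ Real.sqrt ((h t₁) ^ 2) := Real.sqrt_le_sqrt h4
      _ = h t₁ := Real.sqrt_sq hh1.le
  -- positivity of h on all of [t₀, ∞)
  have key : ∀ t, t₀ ≤ t → ∀ u ∈ Set.Icc t₀ t, 0 < h u := by
    by_contra hcon
    push_neg at hcon
    obtain ⟨t, ht, u, hu, hu0⟩ := hcon
    set B : Set ℝ := Set.Ici t₀ ∩ h ⁻¹' Set.Iic 0 with hB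
    have hBne : B.Nonempty := ⟨u, hu.1, hu0⟩
    have hBbd : BddBelow B := ⟨t₀, fun x hx => hx.1⟩
    have hBcl : IsClosed B := hhC.preimage_isClosed_of_isClosed isClosed_Ici isClosed_Iic
    set T := sInf B with hT
    have hTB : T ∈ B := hBcl.csInf_mem hBne hBbd
    have hTge : t₀ ≤ T := hTB.1
    have hTgt : t₀ < T := by
      rcases eq_or_lt_of_le hTge with heq | hlt
      · exact absurd (heq ▸ hTB.2) (not_le.mpr h0)
      · exact hlt
    have hIco : ∀ v ∈ Set.Ico t₀ T, 0 < h v := by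
      intro v hv
      by_contra hv0
      push_neg at hv0
      exact absurd (csInf_le hBbd ⟨hv.1, hv0⟩) (not_le.mpr hv.2)
    have hev : ∀ᶠ v in 𝓝[Set.Ico t₀ T] T, a v * c ≤ h v := by
      filter_upwards [eventually_mem_nhdsWithin] with v hv
      exact hlow v hv.1 fun w hw => hIco w ⟨hw.1, lt_of_le_of_lt hw.2 hv.2⟩
    have hneB : (𝓝[Set.Ico t₀ T] T).NeBot := right_nhdsWithin_Ico_neBot hTgt
    have lima : Tendsto (fun v => a v * c) (𝓝[Set.Ico t₀ T] T) (𝓝 (a T * c)) :=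
      (((haC T hTge).mono (fun x hx => hx.1)).tendsto).mul tendsto_const_nhds
    have limh : Tendsto h (𝓝[Set.Ico t₀ T] T) (𝓝 (h T)) :=
      ((hhC T hTge).mono (fun x hx => hx.1)).tendsto
    have hle : a T * c ≤ h T := le_of_tendsto_of_tendsto lima limh hev
    have : (0:ℝ) < h T :=
      lt_of_lt_of_le (mul_pos (ha_pos T hTge) hcpos) hle
    exact absurd hTB.2 (not_le.mpr this)
  intro t ht
  have hpos : ∀ u ∈ Set.Icc t₀ t, 0 < h u := key t ht
  have hht : 0 < h t := hpos t ⟨ht, le_refl _⟩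
  have hat : 0 < a t := ha_pos t ht
  refine ⟨hht, hlow t ht hpos, fun hs' => ?_⟩
  constructor
  · have := hh t
    nlinarith [hht]
  · positivity
end

section
/- Let I ⊆ ℝ be an interval that is unbounded above or below, and let a : I → ℝ be continuously differentiable with a(η) > 0 and a'(η) > 0 for all η ∈ I. For η₀ ∈ I define A_{η₀}(η) = (η₀ − η)·a(η) on {η ∈ I : η < η₀}. Then there is at most one continuous function g : I → ℝ such that for every η₀ ∈ I: g(η₀) ∈ I, g(η₀) < η₀, and g(η₀) is a local maximum point of A_{η₀}. -/
open Real Filter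

/-- First-order condition at an (interior) local maximum of the light-cone area. -/
private lemma screen_crit (I : Set ℝ) (hI : I.OrdConnected)
    (a : ℝ → ℝ) (ha_diff : ∀ η ∈ I, DifferentiableAt ℝ a η)
    (ha_incr : ∀ η ∈ I, 0 < deriv a η)
    (hnomin : ∀ m ∈ I, ∃ x ∈ I, x < m)
    {η₀ x : ℝ} (hη₀ : η₀ ∈ I) (hx : x ∈ I) (hlt : x < η₀)
    (hmax : IsLocalMaxOn (fun η => (η₀ - η) * a η) {η | η ∈ I ∧ η < η₀} x) :
    IsLocalMax (fun η => (η₀ - η) * a η) x ∧ x + a x / deriv a x = η₀ := by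
  obtain ⟨p, hp, hpx⟩ := hnomin x hx
  have hsub : Set.Ioo p η₀ ⊆ {η | η ∈ I ∧ η < η₀} := fun y hy =>
    ⟨hI.out hp hη₀ ⟨le_of_lt hy.1, le_of_lt hy.2⟩, hy.2⟩
  have hnhds : {η | η ∈ I ∧ η < η₀} ∈ nhds x :=
    Filter.mem_of_superset (Ioo_mem_nhds hpx hlt) hsub
  have hmax' : IsLocalMax (fun η => (η₀ - η) * a η) x := by
    have h := hmax
    rwa [IsLocalMaxOn, nhdsWithin_eq_nhds.2 hnhds] at h
  refine ⟨hmax', ?_⟩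
  have hd : HasDerivAt (fun η => (η₀ - η) * a η) ((0 - 1) * a x + (η₀ - x) * deriv a x) x :=
    ((hasDerivAt_const x η₀).sub (hasDerivAt_id x)).mul (ha_diff x hx).hasDerivAt
  have h0 := hmax'.hasDerivAt_eq_zero hd
  have ha' := ha_incr x hx
  have : a x / deriv a x = η₀ - x := by
    rw [div_eq_iff (ne_of_gt ha')]
    nlinarith [h0]
  linarith

/-- A continuous selection of local maximizers is strictly increasing. -/
private lemma screen_mono (I : Set ℝ) (hI : I.OrdConnected)
    (a : ℝ → ℝ) (ha_diff : ∀ η ∈ I, DifferentiableAt ℝ a η)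
    (ha_incr : ∀ η ∈ I, 0 < deriv a η)
    (hnomin : ∀ m ∈ I, ∃ x ∈ I, x < m)
    (g : ℝ → ℝ) (hgc : ContinuousOn g I)
    (hgI : ∀ η ∈ I, g η ∈ I) (hglt : ∀ η ∈ I, g η < η)
    (hcrit : ∀ η ∈ I, g η + a (g η) / deriv a (g η) = η)
    (hmaxn : ∀ η ∈ I, IsLocalMax (fun η' => (η - η') * a η') (g η)) :
    StrictMonoOn g I := by
  intro u hu v hv huv
  rcases lt_trichotomy (g u) (g v) with h | h | h
  · exact h
  · exfalso
    have h1 := hcrit u hu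
    have h2 := hcrit v hv
    rw [h] at h1
    exact absurd (h1.symm.trans h2) (ne_of_lt huv)
  · exfalso
    -- g v < g u : then A_{u} is strictly decreasing just left of g u, contradicting local max
    have hguI := hgI u hu
    have hgvI := hgI v hv
    have hsubI : Set.Icc (g v) (g u) ⊆ I := hI.out hgvI hguI
    have hsubuv : Set.Icc u v ⊆ I := hI.out hu hv
    have hivt := intermediate_value_Icc' (le_of_lt huv) (hgc.mono hsubuv)
    -- F y > u for y ∈ [g v, g u)
    have key : ∀ y ∈ Set.Ico (g v) (g u), u < y + a y / deriv a y := by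
      intro y hy
      obtain ⟨t, ht, hgt⟩ := hivt ⟨hy.1, le_of_lt hy.2⟩
      have htI : t ∈ I := hsubuv ht
      have hFy : y + a y / deriv a y = t := by
        have := hcrit t htI
        rwa [hgt] at this
      rw [hFy]
      rcases eq_or_lt_of_le ht.1 with h' | h'
      · exfalso
        rw [← h'] at hgt
        exact absurd hgt (ne_of_gt hy.2)
      · exact h'
    -- A := fun η => (u - η) * a η is strictly decreasing on [g v, g u]
    have hcontA : ContinuousOn (fun η => (u - η) * a η) (Set.Icc (g v) (g u)) := by
      apply ContinuousOn.mul
      · exact (continuous_const.sub continuous_id).continuousOn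
      · exact fun y hy => (ha_diff y (hsubI hy)).continuousAt.continuousWithinAt
    have hderivA : ∀ y ∈ interior (Set.Icc (g v) (g u)),
        deriv (fun η => (u - η) * a η) y < 0 := by
      intro y hy
      rw [interior_Icc] at hy
      have hyI : y ∈ I := hsubI ⟨le_of_lt hy.1, le_of_lt hy.2⟩
      have hd : HasDerivAt (fun η => (u - η) * a η) ((0 - 1) * a y + (u - y) * deriv a y) y :=
        ((hasDerivAt_const y u).sub (hasDerivAt_id y)).mul (ha_diff y hyI).hasDerivAt
      rw [hd.deriv]
      have hk := key y ⟨le_of_lt hy.1, hy.2⟩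
      have ha' := ha_incr y hyI
      have : (u - y) * deriv a y < a y := by
        rw [← lt_div_iff₀ ha']
        linarith
      nlinarith
    have hanti : StrictAntiOn (fun η => (u - η) * a η) (Set.Icc (g v) (g u)) :=
      strictAntiOn_of_deriv_neg (convex_Icc _ _) hcontA hderivA
    -- contradiction with local max at g u
    have hmax := hmaxn u hu
    obtain ⟨δ, hδ, hball⟩ := Metric.eventually_nhds_iff.1 hmax
    set y := max (g v) (g u - δ / 2) with hy
    have hylt : y < g u := max_lt h (by linarith)
    have hymem : y ∈ Set.Icc (g v) (g u) := ⟨le_max_left _ _, le_of_lt hylt⟩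
    have hydist : dist y (g u) < δ := by
      rw [Real.dist_eq, abs_of_nonpos (by linarith)]
      have : g u - δ / 2 ≤ y := le_max_right _ _
      linarith
    have h1 := hball hydist
    have h2 := hanti hymem ⟨le_of_lt h, le_refl _⟩ hylt
    simp only at h1 h2
    linarith

/-- Key asymmetric step: `g₁ c < g₂ c` is impossible. -/
private lemma screen_key (I : Set ℝ) (hI : I.OrdConnected)
    (hunb : ¬ BddAbove I ∨ ¬ BddBelow I)
    (a : ℝ → ℝ) (ha_diff : ∀ η ∈ I, DifferentiableAt ℝ a η)
    (ha_cont : ContinuousOn (deriv a) I) (ha_incr : ∀ η ∈ I, 0 < deriv a η)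
    (g₁ g₂ : ℝ → ℝ) (hg₁c : ContinuousOn g₁ I) (hg₂c : ContinuousOn g₂ I)
    (hg₁I : ∀ η ∈ I, g₁ η ∈ I) (hg₁lt : ∀ η ∈ I, g₁ η < η)
    (hg₂I : ∀ η ∈ I, g₂ η ∈ I) (hg₂lt : ∀ η ∈ I, g₂ η < η)
    (hcrit₁ : ∀ η ∈ I, g₁ η + a (g₁ η) / deriv a (g₁ η) = η)
    (hcrit₂ : ∀ η ∈ I, g₂ η + a (g₂ η) / deriv a (g₂ η) = η)
    (hmono₁ : StrictMonoOn g₁ I)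
    {c : ℝ} (hc : c ∈ I) : ¬ (g₁ c < g₂ c) := by
  intro hlt
  rcases hunb with hA | hB
  · -- I unbounded above
    have hex : ∃ η ∈ I, g₂ c ≤ g₁ η := by
      by_contra hcon
      push_neg at hcon
      have hbdd : BddAbove (g₁ '' I) := ⟨g₂ c, by rintro _ ⟨η, hη, rfl⟩; exact (hcon η hη).le⟩
      set s := sSup (g₁ '' I) with hs
      have hne' : (g₁ '' I).Nonempty := ⟨g₁ c, ⟨c, hc, rfl⟩⟩
      have hls : g₁ c ≤ s := le_csSup hbdd ⟨c, hc, rfl⟩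
      have hsle : s ≤ g₂ c := csSup_le hne' (by rintro _ ⟨η, hη, rfl⟩; exact (hcon η hη).le)
      have hsI : s ∈ I := hI.out (hg₁I c hc) hc ⟨hls, le_trans hsle (hg₂lt c hc).le⟩
      have hFc : ContinuousWithinAt (fun y => y + a y / deriv a y) I s := by
        apply ContinuousWithinAt.add continuousWithinAt_id
        exact ((ha_diff s hsI).continuousAt.continuousWithinAt).div
          (ha_cont s hsI) (ne_of_gt (ha_incr s hsI))
      obtain ⟨δ, hδ, hδ'⟩ := Metric.continuousWithinAt_iff.1 hFc 1 one_pos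
      obtain ⟨y₀, hy₀mem, hy₀⟩ := exists_lt_of_lt_csSup hne' (by linarith : s - δ < s)
      obtain ⟨η₁, hη₁, rfl⟩ := hy₀mem
      obtain ⟨η, hη, hηgt⟩ := not_bddAbove_iff.1 hA (max η₁ (s + a s / deriv a s + 1))
      have hη₁η : η₁ ≤ η := le_of_lt (lt_of_le_of_lt (le_max_left _ _) hηgt)
      have hge : g₁ η₁ ≤ g₁ η := hmono₁.monotoneOn hη₁ hη hη₁η
      have hles : g₁ η ≤ s := le_csSup hbdd ⟨η, hη, rfl⟩
      have h1 : dist (g₁ η) s < δ := by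
        rw [Real.dist_eq, abs_of_nonpos (by linarith)]
        linarith
      have h2 := hδ' (hg₁I η hη) h1
      rw [hcrit₁ η hη, Real.dist_eq] at h2
      have h3 := (abs_lt.1 h2).2
      have h4 : s + a s / deriv a s + 1 < η := lt_of_le_of_lt (le_max_right _ _) hηgt
      linarith
    obtain ⟨η, hη, hge⟩ := hex
    have hcη : c < η := by
      by_contra hcon
      push_neg at hcon
      have := hmono₁.monotoneOn hη hc hcon
      linarith
    have hsub : Set.Icc c η ⊆ I := hI.out hc hη
    obtain ⟨t, ht, hgt⟩ := intermediate_value_Icc hcη.le (hg₁c.mono hsub) ⟨hlt.le, hge⟩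
    have htI : t ∈ I := hsub ht
    have h1 := hcrit₁ t htI
    rw [hgt] at h1
    have h2 := hcrit₂ c hc
    have htc : t = c := h1.symm.trans h2
    rw [htc] at hgt
    exact absurd hgt (ne_of_lt hlt)
  -- I unbounded below
  ·
    obtain ⟨η, hη, hηlt⟩ := not_bddBelow_iff.1 hB (g₁ c)
    have hηc : η < c := lt_trans hηlt (lt_trans hlt (hg₂lt c hc))
    have hsub : Set.Icc η c ⊆ I := hI.out hη hc
    obtain ⟨t, ht, hgt⟩ := intermediate_value_Icc hηc.le (hg₂c.mono hsub)
      ⟨(lt_trans (hg₂lt η hη) hηlt).le, hlt.le⟩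
    have htI : t ∈ I := hsub ht
    have h1 := hcrit₂ t htI
    rw [hgt] at h1
    have h2 := hcrit₁ c hc
    have htc : t = c := h1.symm.trans h2
    rw [htc] at hgt
    exact absurd hgt (ne_of_gt hlt)

/-- Uniqueness of continuous holographic screens in RW spacetimes: two continuous
selections of local maximum points of `A_{η₀}(η) = (η₀ − η)·a(η)` on every past
light cone must coincide. -/
theorem stmt_15 (I : Set ℝ) (hI : I.OrdConnected) (hne : I.Nonempty)
    (hunb : ¬ BddAbove I ∨ ¬ BddBelow I)
    (a : ℝ → ℝ)
    (ha_diff : ∀ η ∈ I, DifferentiableAt ℝ a η)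
    (ha_cont : ContinuousOn (deriv a) I)
    (ha_pos : ∀ η ∈ I, 0 < a η)
    (ha_incr : ∀ η ∈ I, 0 < deriv a η)
    (g₁ g₂ : ℝ → ℝ)
    (hg₁c : ContinuousOn g₁ I) (hg₂c : ContinuousOn g₂ I)
    (hg₁ : ∀ η₀ ∈ I, g₁ η₀ ∈ I ∧ g₁ η₀ < η₀ ∧
      IsLocalMaxOn (fun η => (η₀ - η) * a η) {η | η ∈ I ∧ η < η₀} (g₁ η₀))
    (hg₂ : ∀ η₀ ∈ I, g₂ η₀ ∈ I ∧ g₂ η₀ < η₀ ∧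
      IsLocalMaxOn (fun η => (η₀ - η) * a η) {η | η ∈ I ∧ η < η₀} (g₂ η₀)) :
    Set.EqOn g₁ g₂ I := by
  by_cases hmin : ∃ m ∈ I, ∀ x ∈ I, m ≤ x
  · obtain ⟨m, hm, hmle⟩ := hmin
    obtain ⟨h1, h2, _⟩ := hg₁ m hm
    exact absurd h2 (not_lt.2 (hmle _ h1))
  push_neg at hmin
  have hnomin : ∀ m ∈ I, ∃ x ∈ I, x < m := by
    intro m hm
    obtain ⟨x, hx, h⟩ := hmin m hm
    exact ⟨x, hx, h⟩
  have hg₁I : ∀ η ∈ I, g₁ η ∈ I := fun η hη => (hg₁ η hη).1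
  have hg₁lt : ∀ η ∈ I, g₁ η < η := fun η hη => (hg₁ η hη).2.1
  have hg₂I : ∀ η ∈ I, g₂ η ∈ I := fun η hη => (hg₂ η hη).1
  have hg₂lt : ∀ η ∈ I, g₂ η < η := fun η hη => (hg₂ η hη).2.1
  have hcrit₁ : ∀ η ∈ I, g₁ η + a (g₁ η) / deriv a (g₁ η) = η := fun η hη =>
    (screen_crit I hI a ha_diff ha_incr hnomin hη (hg₁I η hη) (hg₁lt η hη) (hg₁ η hη).2.2).2
  have hcrit₂ : ∀ η ∈ I, g₂ η + a (g₂ η) / deriv a (g₂ η) = η := fun η hη =>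
    (screen_crit I hI a ha_diff ha_incr hnomin hη (hg₂I η hη) (hg₂lt η hη) (hg₂ η hη).2.2).2
  have hmaxn₁ : ∀ η ∈ I, IsLocalMax (fun η' => (η - η') * a η') (g₁ η) := fun η hη =>
    (screen_crit I hI a ha_diff ha_incr hnomin hη (hg₁I η hη) (hg₁lt η hη) (hg₁ η hη).2.2).1
  have hmaxn₂ : ∀ η ∈ I, IsLocalMax (fun η' => (η - η') * a η') (g₂ η) := fun η hη =>
    (screen_crit I hI a ha_diff ha_incr hnomin hη (hg₂I η hη) (hg₂lt η hη) (hg₂ η hη).2.2).1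
  have hmono₁ : StrictMonoOn g₁ I :=
    screen_mono I hI a ha_diff ha_incr hnomin g₁ hg₁c hg₁I hg₁lt hcrit₁ hmaxn₁
  have hmono₂ : StrictMonoOn g₂ I :=
    screen_mono I hI a ha_diff ha_incr hnomin g₂ hg₂c hg₂I hg₂lt hcrit₂ hmaxn₂
  intro c hc
  have h₁ := screen_key I hI hunb a ha_diff ha_cont ha_incr g₁ g₂ hg₁c hg₂c hg₁I hg₁lt
    hg₂I hg₂lt hcrit₁ hcrit₂ hmono₁ hc
  have h₂ := screen_key I hI hunb a ha_diff ha_cont ha_incr g₂ g₁ hg₂c hg₁c hg₂I hg₂lt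
    hg₁I hg₁lt hcrit₂ hcrit₁ hmono₂ hc
  exact le_antisymm (not_lt.1 h₂) (not_lt.1 h₁)
end

section
/- Let I ⊆ ℝ be an interval that is unbounded above or below, and let a : I → ℝ be continuously differentiable with a(η) > 0 and a'(η) > 0 for all η ∈ I. For η₀ ∈ I define A_{η₀}(η) = (η₀ − η)·a(η) on {η ∈ I : η < η₀}. Suppose there exists a continuous function g : I → ℝ such that for every η₀ ∈ I: g(η₀) ∈ I, g(η₀) < η₀, and g(η₀) is a local maximum point of A_{η₀}. Then for every η₀ ∈ I, the function A_{η₀} attains a global maximum on {η ∈ I : η < η₀}; in particular its supremum there is finite. -/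
open Filter Topology Set

/-!
Write `A_{η₀}(η) = (η₀ - η) a(η)`. If the screen point `x = g t` of the cone with tip `t ≤ η₀`
is an interior point of `I`, it is a critical point of `A_t`, i.e. `(t - x) a'(x) = a(x)`,
and therefore `A_{η₀}'(x) = (η₀ - t) a'(x) ≥ 0`. By the intermediate value theorem for `g`,
every `x` between `g η` and `g η₀` is such a screen point, so `A_{η₀}` is nondecreasing up to
`g η₀`; beyond it, the maximum over the compact interval `[g η₀, η₀]` wins.
-/

/-- `A_{η₀}(η)`: the area of the slice `η` of the past light cone with tip `η₀` is a constant
multiple of `lightConeArea a η₀ η ^ (d - 1)`. -/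
def lightConeArea (a : ℝ → ℝ) (η₀ η : ℝ) : ℝ := (η₀ - η) * a η

section

variable {a : ℝ → ℝ} {a' t x : ℝ}

lemma hasDerivAt_lightConeArea (ha : HasDerivAt a a' x) :
    HasDerivAt (lightConeArea a t) ((t - x) * a' - a x) x :=
  (((hasDerivAt_id' x).const_sub t).mul ha).congr_deriv (by ring)

lemma differentiableOn_lightConeArea {S : Set ℝ} (ha : ∀ x ∈ S, DifferentiableAt ℝ a x) :
    DifferentiableOn ℝ (lightConeArea a t) S := fun x hx =>
  (hasDerivAt_lightConeArea (ha x hx).hasDerivAt).differentiableAt.differentiableWithinAt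

lemma lightConeArea_critical {S : Set ℝ} (ha : HasDerivAt a a' x) (hS : S ∈ 𝓝 x)
    (hmax : IsLocalMaxOn (lightConeArea a t) S x) : (t - x) * a' = a x := by
  have := (hmax.isLocalMax hS).hasDerivAt_eq_zero (hasDerivAt_lightConeArea ha)
  linarith

lemma lightConeArea_deriv_nonneg_of_critical {η₀ : ℝ} (hcrit : (t - x) * a' = a x)
    (ha' : 0 ≤ a') (ht : t ≤ η₀) : 0 ≤ (η₀ - x) * a' - a x := by
  rw [← hcrit]
  nlinarith

end

lemma setOf_mem_and_lt_mem_nhds {I : Set ℝ} (hI : I.OrdConnected) {β x t : ℝ} (hβ : β ∈ I)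
    (ht : t ∈ I) (hβx : β < x) (hxt : x < t) : {η | η ∈ I ∧ η < t} ∈ 𝓝 x :=
  mem_of_superset (Ioo_mem_nhds hβx hxt) fun _ hy => ⟨hI.out hβ ht (Ioo_subset_Icc_self hy), hy.2⟩

lemma monotoneOn_lightConeArea {I : Set ℝ} (hI : I.OrdConnected) {a g : ℝ → ℝ}
    (ha : ∀ η ∈ I, DifferentiableAt ℝ a η) (ha' : ∀ η ∈ I, 0 ≤ deriv a η)
    (hgc : ContinuousOn g I)
    (hg : ∀ η₀ ∈ I, g η₀ ∈ I ∧ g η₀ < η₀ ∧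
      IsLocalMaxOn (lightConeArea a η₀) {η | η ∈ I ∧ η < η₀} (g η₀))
    {η η₀ : ℝ} (hη : η ∈ I) (hη₀ : η₀ ∈ I) :
    MonotoneOn (lightConeArea a η₀) (Icc η (g η₀)) := by
  have hIcc : Icc η (g η₀) ⊆ I := hI.out hη (hg η₀ hη₀).1
  refine monotoneOn_of_deriv_nonneg (convex_Icc _ _)
    (differentiableOn_lightConeArea fun x hx => ha x (hIcc hx)).continuousOn
    (differentiableOn_lightConeArea fun x hx => ha x (hIcc (interior_subset hx))) fun x hx => ?_
  rw [interior_Icc] at hx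
  have hxI : x ∈ I := hIcc (Ioo_subset_Icc_self hx)
  have hηη₀ : η ≤ η₀ := (hx.1.trans hx.2).le.trans (hg η₀ hη₀).2.1.le
  obtain ⟨t, ht, rfl⟩ : ∃ t ∈ Icc η η₀, g t = x :=
    intermediate_value_Icc hηη₀ (hgc.mono (hI.out hη hη₀))
      ⟨((hg η hη).2.1.trans hx.1).le, hx.2.le⟩
  obtain ⟨-, hgt, hmax⟩ := hg t (hI.out hη hη₀ ht)
  have hdx := (ha _ hxI).hasDerivAt
  rw [(hasDerivAt_lightConeArea hdx).deriv]
  exact lightConeArea_deriv_nonneg_of_critical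
    (lightConeArea_critical hdx (setOf_mem_and_lt_mem_nhds hI hη (hI.out hη hη₀ ht) hx.1 hgt) hmax)
    (ha' _ hxI) ht.2

theorem stmt_16_general (I : Set ℝ) (hI : I.OrdConnected)
    (a : ℝ → ℝ)
    (ha_diff : ∀ η ∈ I, DifferentiableAt ℝ a η)
    (ha_pos : ∀ η ∈ I, 0 < a η)
    (ha_incr : ∀ η ∈ I, 0 < deriv a η)
    (g : ℝ → ℝ) (hgc : ContinuousOn g I)
    (hg : ∀ η₀ ∈ I, g η₀ ∈ I ∧ g η₀ < η₀ ∧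
      IsLocalMaxOn (fun η => (η₀ - η) * a η) {η | η ∈ I ∧ η < η₀} (g η₀)) :
    ∀ η₀ ∈ I, ∃ ηm, ηm ∈ I ∧ ηm < η₀ ∧
      ∀ η ∈ I, η < η₀ → (η₀ - η) * a η ≤ (η₀ - ηm) * a ηm := by
  intro η₀ hη₀
  obtain ⟨hgI, hglt, -⟩ := hg η₀ hη₀
  have hIcc : Icc (g η₀) η₀ ⊆ I := hI.out hgI hη₀
  obtain ⟨ηm, hηm, hmax⟩ := isCompact_Icc.exists_isMaxOn (nonempty_Icc.2 hglt.le)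
    (differentiableOn_lightConeArea fun x hx => ha_diff x (hIcc hx)).continuousOn
  have hscreen_le : lightConeArea a η₀ (g η₀) ≤ lightConeArea a η₀ ηm :=
    hmax (left_mem_Icc.2 hglt.le)
  have hscreen_pos : 0 < lightConeArea a η₀ (g η₀) :=
    mul_pos (sub_pos.2 hglt) (ha_pos _ hgI)
  have hηm_lt : ηm < η₀ := by
    refine hηm.2.lt_of_ne ?_
    rintro rfl
    simp only [lightConeArea, sub_self, zero_mul] at hscreen_le hscreen_pos
    linarith
  refine ⟨ηm, hIcc hηm, hηm_lt, fun η hη hlt => ?_⟩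
  rcases le_or_gt η (g η₀) with hle | hgt
  · exact (monotoneOn_lightConeArea hI ha_diff (fun x hx => (ha_incr x hx).le) hgc hg hη hη₀
      (left_mem_Icc.2 hle) (right_mem_Icc.2 hle) hle).trans hscreen_le
  · exact hmax ⟨hgt.le, hlt.le⟩

/-- Partial converse: if a continuous holographic screen with local-maximum leaves
exists on every past light cone, then every light cone has a globally maximal area
slice (so the supremum of `A_{η₀}` is finite and attained). -/
theorem stmt_16 (I : Set ℝ) (hI : I.OrdConnected) (hne : I.Nonempty)
    (hunb : ¬ BddAbove I ∨ ¬ BddBelow I)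
    (a : ℝ → ℝ)
    (ha_diff : ∀ η ∈ I, DifferentiableAt ℝ a η)
    (ha_cont : ContinuousOn (deriv a) I)
    (ha_pos : ∀ η ∈ I, 0 < a η)
    (ha_incr : ∀ η ∈ I, 0 < deriv a η)
    (g : ℝ → ℝ) (hgc : ContinuousOn g I)
    (hg : ∀ η₀ ∈ I, g η₀ ∈ I ∧ g η₀ < η₀ ∧
      IsLocalMaxOn (fun η => (η₀ - η) * a η) {η | η ∈ I ∧ η < η₀} (g η₀)) :
    ∀ η₀ ∈ I, ∃ ηm, ηm ∈ I ∧ ηm < η₀ ∧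
      ∀ η ∈ I, η < η₀ → (η₀ - η) * a η ≤ (η₀ - ηm) * a ηm :=
  stmt_16_general I hI a ha_diff ha_pos ha_incr g hgc hg
end

section
/- For every η₀ < 0, the equation χ = tanh(χ − η₀) has exactly one solution χ(η₀) with χ > 0, and this solution lies in the interval (0,1). Moreover, χ(η₀)/(−3η₀)^{1/3} → 1 as η₀ → 0⁻; indeed χ(η₀) = (−3η₀)^{1/3} + O(η₀) as η₀ → 0⁻. -/
/-!
Put `u = χ - η₀ > 0`; the equation becomes `u - tanh u = -η₀`. Since `(u - tanh u)' = tanh² u`,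
the map `u ↦ u - tanh u` is strictly increasing on `[0, ∞)`, which gives uniqueness, and the
intermediate value theorem on `[0, 1]` gives existence; `χ = tanh(…) < 1` is automatic.
Integrating `tanh' = 1 - tanh²` twice gives `u - u³/3 ≤ tanh u ≤ u - u³/3 + 2u⁵/15`, so
`u³ - 2u⁵/5 ≤ -3η₀ ≤ u³`: `u` exceeds the cube root `t = (-3η₀)^{1/3}` by `O(t³) = O(η₀)`, and so
does `χ = u + η₀`. An error `O(t³)` is `o(t)`, hence `χ / t → 1`.
-/

open Real Filter Set Asymptotics Topology

theorem monotoneOn_of_hasDerivAt_nonneg_interior {D : Set ℝ} (hD : Convex ℝ D) {f f' : ℝ → ℝ}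
    (hf : ∀ x, HasDerivAt f (f' x) x) (hf' : ∀ x ∈ interior D, 0 ≤ f' x) : MonotoneOn f D :=
  monotoneOn_of_hasDerivWithinAt_nonneg hD
    (continuous_iff_continuousAt.2 fun x ↦ (hf x).continuousAt).continuousOn
    (fun x _ ↦ (hf x).hasDerivWithinAt) hf'

namespace Real

theorem hasDerivAt_tanh (x : ℝ) : HasDerivAt tanh (1 - tanh x ^ 2) x := by
  have h := (hasDerivAt_sinh x).div (hasDerivAt_cosh x) (cosh_pos x).ne'
  rw [show tanh = sinh / cosh from funext tanh_eq_sinh_div_cosh]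
  refine h.congr_deriv ?_
  rw [Pi.div_apply]
  field_simp

theorem continuous_tanh : Continuous tanh :=
  continuous_iff_continuousAt.2 fun x ↦ (hasDerivAt_tanh x).continuousAt

theorem tanh_pos {x : ℝ} (hx : 0 < x) : 0 < tanh x := by
  rw [tanh_eq_sinh_div_cosh]
  exact div_pos (sinh_pos_iff.2 hx) (cosh_pos x)

theorem strictMonoOn_sub_tanh : StrictMonoOn (fun x ↦ x - tanh x) (Ici 0) := by
  refine strictMonoOn_of_hasDerivWithinAt_pos (convex_Ici 0)
    (continuous_id.sub continuous_tanh).continuousOn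
    (fun x _ ↦ ((hasDerivAt_id x).sub (hasDerivAt_tanh x)).hasDerivWithinAt) fun x hx ↦ ?_
  rw [interior_Ici] at hx
  linarith [pow_pos (tanh_pos hx) 2]

theorem tanh_le_self {x : ℝ} (hx : 0 ≤ x) : tanh x ≤ x := by
  simpa [tanh_zero] using strictMonoOn_sub_tanh.monotoneOn self_mem_Ici hx hx

theorem sub_pow_three_div_three_le_tanh {x : ℝ} (hx : 0 ≤ x) : x - x ^ 3 / 3 ≤ tanh x := by
  have hmono : MonotoneOn (fun y ↦ tanh y - (y - y ^ 3 / 3)) (Ici 0) := by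
    refine monotoneOn_of_hasDerivAt_nonneg_interior (convex_Ici 0)
      (fun y ↦ (hasDerivAt_tanh y).sub
        ((hasDerivAt_id y).sub ((hasDerivAt_pow 3 y).div_const 3))) fun y hy ↦ ?_
    rw [interior_Ici] at hy
    have h0 := (tanh_pos hy).le
    have h1 := tanh_le_self hy.le
    nlinarith
  have := hmono self_mem_Ici hx hx
  simp only [tanh_zero] at this
  linarith

theorem tanh_le_of_le_sqrt_three {x : ℝ} (hx : 0 ≤ x) (hx3 : x ≤ √3) :
    tanh x ≤ x - x ^ 3 / 3 + 2 / 15 * x ^ 5 := by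
  have hmono : MonotoneOn (fun y ↦ y - y ^ 3 / 3 + 2 / 15 * y ^ 5 - tanh y) (Icc 0 √3) := by
    refine monotoneOn_of_hasDerivAt_nonneg_interior (convex_Icc 0 √3)
      (fun y ↦ (((hasDerivAt_id y).sub ((hasDerivAt_pow 3 y).div_const 3)).add
        ((hasDerivAt_pow 5 y).const_mul _)).sub (hasDerivAt_tanh y)) fun y hy ↦ ?_
    rw [interior_Icc] at hy
    have hy3 : y ^ 2 ≤ 3 := by nlinarith [sq_sqrt (show (0 : ℝ) ≤ 3 by norm_num), hy.1, hy.2]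
    have hpoly : 0 ≤ y - y ^ 3 / 3 := by nlinarith [hy.1]
    -- the derivative is `tanh² y - (y - y³/3)² + y⁶/9`
    have hsq : (y - y ^ 3 / 3) ^ 2 ≤ tanh y ^ 2 :=
      pow_le_pow_left₀ hpoly (sub_pow_three_div_three_le_tanh hy.1.le) 2
    push_cast
    nlinarith [pow_two_nonneg (y ^ 3)]
  have := hmono (left_mem_Icc.2 (sqrt_nonneg 3)) ⟨hx, hx3⟩ hx
  simp only [tanh_zero] at this
  linarith

end Real

theorem existsUnique_pos_eq_tanh_sub {η₀ : ℝ} (hη₀ : η₀ < 0) :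
    ∃! χ : ℝ, 0 < χ ∧ χ = tanh (χ - η₀) := by
  have hcont : ContinuousOn (fun χ ↦ χ - tanh (χ - η₀)) (Icc 0 1) :=
    (continuous_id.sub (continuous_tanh.comp (continuous_sub_right η₀))).continuousOn
  have h0 : 0 - tanh (0 - η₀) < 0 := by linarith [tanh_pos (show 0 < 0 - η₀ by linarith)]
  have h1 : 0 < 1 - tanh (1 - η₀) := by linarith [tanh_lt_one (1 - η₀)]
  obtain ⟨χ, hχ, hroot⟩ := intermediate_value_Icc zero_le_one hcont ⟨h0.le, h1.le⟩
  have hχ0 : χ ≠ 0 := by rintro rfl; exact h0.ne hroot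
  refine ⟨χ, ⟨lt_of_le_of_ne hχ.1 hχ0.symm, by linarith [hroot]⟩, fun χ' ⟨hχ', hroot'⟩ ↦ ?_⟩
  have := strictMonoOn_sub_tanh.injOn (show χ' - η₀ ∈ Ici 0 by simp only [mem_Ici]; linarith)
    (show χ - η₀ ∈ Ici 0 by simp only [mem_Ici]; linarith [hχ.1]) (by linarith)
  linarith

theorem sub_le_of_pow_three_bounds {u t : ℝ} (ht : 0 < t) (hu0 : 0 ≤ u) (hu : u ^ 2 ≤ 5 / 4)
    (hlow : t ^ 3 ≤ u ^ 3) (hhigh : u ^ 3 - 2 / 5 * u ^ 5 ≤ t ^ 3) :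
    t ≤ u ∧ u - t ≤ 64 / 15 * t ^ 3 := by
  have htu : t ≤ u := le_of_pow_le_pow_left₀ three_ne_zero hu0 hlow
  have hu2t : u ≤ 2 * t := by
    refine le_of_pow_le_pow_left₀ three_ne_zero (by positivity) ?_
    nlinarith [pow_nonneg hu0 3]
  have hfactor : (u - t) * (3 * t ^ 2) ≤ u ^ 3 - t ^ 3 := by
    nlinarith [mul_nonneg (mul_nonneg (sub_nonneg.2 htu) (sub_nonneg.2 htu))
      (by positivity : 0 ≤ u + 2 * t)]
  have hu5 : u ^ 5 ≤ 32 * t ^ 5 := by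
    linarith [pow_le_pow_left₀ hu0 hu2t 5, show (2 * t) ^ 5 = 32 * t ^ 5 by ring]
  refine ⟨htu, le_of_mul_le_mul_right (a := 3 * t ^ 2) ?_ (by positivity)⟩
  nlinarith

theorem rpow_one_div_three_pow_three {x : ℝ} (hx : 0 ≤ x) : (x ^ ((1 : ℝ) / 3)) ^ 3 = x := by
  rw [one_div]
  exact_mod_cast rpow_inv_natCast_pow hx three_ne_zero

theorem abs_sub_rpow_one_div_three_le {η₀ χ : ℝ} (hη₀ : -(1 / 10) < η₀) (hη₀' : η₀ < 0)
    (hχ : 0 < χ) (h : χ = tanh (χ - η₀)) :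
    |χ - (-3 * η₀) ^ ((1 : ℝ) / 3)| ≤ 12 * (-η₀) := by
  set t := (-3 * η₀) ^ ((1 : ℝ) / 3)
  set u := χ - η₀
  have ht : 0 < t := rpow_pos_of_pos (by linarith) _
  have ht3 : t ^ 3 = -3 * η₀ := rpow_one_div_three_pow_three (by linarith)
  have hu0 : 0 ≤ u := by linarith
  have hu1 : u ≤ 11 / 10 := by linarith [h ▸ tanh_lt_one u]
  have hu3 : u ≤ √3 := hu1.trans (by rw [le_sqrt] <;> norm_num)
  have hlow := sub_pow_three_div_three_le_tanh hu0
  have hhigh := tanh_le_of_le_sqrt_three hu0 hu3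
  rw [← h] at hlow hhigh
  obtain ⟨htu, hut⟩ :=
    sub_le_of_pow_three_bounds (u := u) ht hu0 (by nlinarith) (by linarith) (by linarith)
  rw [abs_le]
  constructor <;> linarith

theorem tendsto_div_rpow_one_div_three_of_abs_sub_le {f : ℝ → ℝ} {C δ : ℝ} (hδ : 0 < δ)
    (h : ∀ η ∈ Ioo (-δ) 0, |f η - (-3 * η) ^ ((1 : ℝ) / 3)| ≤ C * (-η)) :
    Tendsto (fun η ↦ f η / (-3 * η) ^ ((1 : ℝ) / 3)) (𝓝[<] 0) (𝓝 1) := by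
  set g : ℝ → ℝ := fun η ↦ (-3 * η) ^ ((1 : ℝ) / 3)
  have hmem : Ioo (-δ) 0 ∈ 𝓝[<] (0 : ℝ) := Ioo_mem_nhdsLT (by linarith)
  have hg : Tendsto g (𝓝[<] 0) (𝓝 0) := by
    have : ContinuousAt g 0 :=
      (continuousAt_rpow_const _ _ (.inr (by norm_num))).comp (continuous_const_mul _).continuousAt
    simpa [g] using this.tendsto.mono_left nhdsWithin_le_nhds
  have hg0 : ∀ᶠ η in 𝓝[<] 0, g η ≠ 0 :=
    eventually_mem_nhdsWithin.mono fun η hη ↦ (rpow_pos_of_pos (by linarith [hη.out]) _).ne'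
  -- `-η = g η ^ 3 / 3`, so an `O(η)` error is `O(g³) = o(g)`
  have hO : (fun η ↦ f η - g η) =O[𝓝[<] 0] fun η ↦ g η ^ 3 := by
    refine IsBigO.of_bound (C / 3) (eventually_of_mem hmem fun η hη ↦ ?_)
    have hη3 : 0 ≤ -3 * η := by linarith [hη.2]
    rw [norm_pow, Real.norm_eq_abs, Real.norm_eq_abs, abs_of_nonneg (rpow_nonneg hη3 _),
      rpow_one_div_three_pow_three hη3]
    linarith [h η hη]
  have hequiv : f ~[𝓝[<] 0] g :=
    hO.trans_isLittleO ((isLittleO_pow_id (by norm_num)).comp_tendsto hg)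
  exact (isEquivalent_iff_tendsto_one hg0).1 hequiv

/-- The holographic screen leaf radius in the worked example: for each `η₀ < 0` the
equation `χ = tanh(χ − η₀)` has a unique positive solution, lying in `(0,1)`, and this
solution behaves as `(−3η₀)^{1/3} + O(η₀)` as `η₀ → 0⁻`. -/
theorem stmt_18 :
    (∀ η₀ : ℝ, η₀ < 0 →
      (∃! χ : ℝ, 0 < χ ∧ χ = Real.tanh (χ - η₀)) ∧
      (∀ χ : ℝ, 0 < χ → χ = Real.tanh (χ - η₀) → χ ∈ Set.Ioo (0:ℝ) 1)) ∧
    (∀ c : ℝ → ℝ, (∀ η₀ : ℝ, η₀ < 0 → 0 < c η₀ ∧ c η₀ = Real.tanh (c η₀ - η₀)) →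
      Tendsto (fun η₀ => c η₀ / (-3 * η₀) ^ ((1:ℝ)/3))
        (nhdsWithin 0 (Set.Iio 0)) (nhds 1) ∧
      ∃ C > 0, ∃ δ > 0, ∀ η₀ ∈ Set.Ioo (-δ) (0:ℝ),
        |c η₀ - (-3 * η₀) ^ ((1:ℝ)/3)| ≤ C * (-η₀)) := by
  refine ⟨fun η₀ hη₀ ↦ ⟨existsUnique_pos_eq_tanh_sub hη₀, fun χ hχ h ↦ ⟨hχ, h ▸ tanh_lt_one _⟩⟩,
    fun c hc ↦ ?_⟩
  have hbound : ∀ η₀ ∈ Ioo (-(1 / 10)) (0 : ℝ), |c η₀ - (-3 * η₀) ^ ((1 : ℝ) / 3)| ≤ 12 * (-η₀) :=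
    fun η₀ hη₀ ↦ abs_sub_rpow_one_div_three_le hη₀.1 hη₀.2 (hc η₀ hη₀.2).1 (hc η₀ hη₀.2).2
  exact ⟨tendsto_div_rpow_one_div_three_of_abs_sub_le (by norm_num) hbound,
    12, by norm_num, 1 / 10, by norm_num, hbound⟩
end
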